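/- arXiv:0910.3323 — 8 statements merged into one kernel-verified Lean document; each statement's English description precedes it below -/
import Mathlib

section
/- Suppose the data (u_{n,i,j}, N, H, U_i) satisfy Hypotheses (H) with g = 1 (write U = U_1 = H and u_n = u_{n,1,1}). Then for every integer n with 0 ≤ n < N and every integer m ≥ 0 with m ∉ {n, n+1}, the strict inequality (u_n − u_{n+1})·p^m + p^n·(p−1)·u_m > (u_n − u_{n+1})·p^n + p^n·(p−1)·u_n holds in ℝ ∪ {+∞}. (Here u_n and u_{n+1} are real since n+1 ≤ N ≤ N_1; equivalently, the point (p^m, u_m) lies strictly above the line through (p^n, u_n) and (p^{n+1}, u_{n+1}), so the segment joining these two points is a cell of the Newton polygon of the data.) -/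
open scoped BigOperators

noncomputable section

/-- Hypotheses (H) on the data `(u, U)`: conditions (i)–(iv).  Here the condition
`1 ≤ n ≤ N_i` is expressed as `1 ≤ n ∧ (p^n - 1)/(p-1) * U i < 1`, and `n > N_i`
as `(p^n - 1)/(p-1) * U i ≥ 1`, using that `N_i` is the largest element of
`ℕ ∪ {∞}` with `(p^{N_i} - 1)/(p-1) · U_i < 1`. -/
def SatisfiesHyp (p : ℕ) {g : ℕ} (U : Fin g → ℝ) (u : ℕ → Fin g → Fin g → EReal) : Prop :=
  (∀ i, u 0 i i = 0) ∧
  (∀ i j, i ≠ j → u 0 i j = ⊤) ∧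
  (∀ (i : Fin g) (n : ℕ), 1 ≤ n → ((p : ℝ) ^ n - 1) / ((p : ℝ) - 1) * U i < 1 →
      u n i i = ((((p : ℝ) ^ n - 1) / ((p : ℝ) - 1) * U i - n : ℝ) : EReal)) ∧
  (∀ (i : Fin g) (n : ℕ), 1 ≤ ((p : ℝ) ^ n - 1) / ((p : ℝ) - 1) * U i →
      ((1 - n : ℝ) : EReal) ≤ u n i i) ∧
  (∀ (i j : Fin g) (n : ℕ), ((-n : ℝ) : EReal) ≤ u n i j) ∧
  (∀ (i j : Fin g) (n : ℕ), j < i → ((1 - n : ℝ) : EReal) ≤ u n i j)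

private lemma geom_lb (P : ℝ) (hP : 2 ≤ P) : ∀ d : ℕ, (d : ℝ) * (P - 1) ≤ P ^ d - 1 := by
  intro d
  induction d with
  | zero => simp
  | succ k ih =>
    have hk : (0:ℝ) ≤ P ^ k - 1 := by
      have : (1:ℝ) ≤ P ^ k := one_le_pow₀ (by linarith)
      linarith
    push_cast
    rw [show P ^ (k+1) = P ^ k * P by ring]
    nlinarith [ih]

private lemma geom_lb_strict (P : ℝ) (hP : 2 ≤ P) {d : ℕ} (hd : 2 ≤ d) :
    (d : ℝ) * (P - 1) < P ^ d - 1 := by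
  induction d with
  | zero => omega
  | succ k ih =>
    rcases Nat.lt_or_ge k 2 with hk | hk
    · interval_cases k
      · omega
      · push_cast; nlinarith
    · have h1 : (1:ℝ) ≤ P ^ k := one_le_pow₀ (by linarith)
      have := ih hk
      push_cast
      rw [show P ^ (k+1) = P ^ k * P by ring]
      nlinarith

private lemma geom_ub (P : ℝ) (hP : 2 ≤ P) : ∀ d : ℕ, 1 ≤ d → P ^ d - 1 < (d : ℝ) * (P - 1) * P ^ d := by
  intro d
  induction d with
  | zero => omega
  | succ k ih =>
    intro _
    rcases Nat.eq_zero_or_pos k with rfl | hk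
    · push_cast; nlinarith
    · have h1 : (1:ℝ) ≤ P ^ k := one_le_pow₀ (by linarith)
      have := ih hk
      push_cast
      rw [show P ^ (k+1) = P ^ k * P by ring]
      nlinarith [mul_lt_mul_of_pos_right this (show (0:ℝ) < P by linarith),
        mul_le_mul_of_nonneg_left (show (1:ℝ) ≤ P ^ k * P by nlinarith)
          (show (0:ℝ) ≤ P - 1 by linarith)]

private lemma case_a (P H : ℝ) (hP : 2 ≤ P) (n m : ℕ) (h : m < n ∨ n + 1 < m) :
    ((P^n-1)/(P-1)*H - n - ((P^(n+1)-1)/(P-1)*H - (n+1))) * P^n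
        + P^n*(P-1)*((P^n-1)/(P-1)*H - n)
      < ((P^n-1)/(P-1)*H - n - ((P^(n+1)-1)/(P-1)*H - (n+1))) * P^m
        + P^n*(P-1)*((P^m-1)/(P-1)*H - m) := by
  have hP1 : P - 1 ≠ 0 := by intro h'; nlinarith
  have hid : ((P^n-1)/(P-1)*H - n - ((P^(n+1)-1)/(P-1)*H - (n+1))) * P^m
        + P^n*(P-1)*((P^m-1)/(P-1)*H - m)
      - (((P^n-1)/(P-1)*H - n - ((P^(n+1)-1)/(P-1)*H - (n+1))) * P^n
        + P^n*(P-1)*((P^n-1)/(P-1)*H - n))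
      = (P^m - P^n) - P^n*(P-1)*((m:ℝ)-(n:ℝ)) := by
    field_simp
    ring
  have key : 0 < (P^m - P^n) - P^n*(P-1)*((m:ℝ)-(n:ℝ)) := by
    rcases h with h | h
    · obtain ⟨d, rfl⟩ : ∃ d, n = m + d := ⟨n - m, by omega⟩
      have hd1 : 1 ≤ d := by omega
      have hub := geom_ub P hP d hd1
      have hPm : (0:ℝ) < P ^ m := by positivity
      rw [pow_add]
      push_cast
      nlinarith [hub, hPm]
    · obtain ⟨d, rfl⟩ : ∃ d, m = n + d := ⟨m - n, by omega⟩
      have hd2 : 2 ≤ d := by omega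
      have hlb := geom_lb_strict P hP hd2
      have hPn : (0:ℝ) < P ^ n := by positivity
      rw [pow_add]
      push_cast
      nlinarith [hlb, hPn]
  linarith

private lemma case_b (P H : ℝ) (hP : 2 ≤ P) (n m : ℕ) (hm : n + 2 ≤ m)
    (ht : H * P^(n+1) < P - 1) (w : ℝ) (hw : 1 - (m:ℝ) ≤ w) :
    ((P^n-1)/(P-1)*H - n - ((P^(n+1)-1)/(P-1)*H - (n+1))) * P^n
        + P^n*(P-1)*((P^n-1)/(P-1)*H - n)
      < ((P^n-1)/(P-1)*H - n - ((P^(n+1)-1)/(P-1)*H - (n+1))) * P^m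
        + P^n*(P-1)*w := by
  have hP1 : P - 1 ≠ 0 := by intro h'; nlinarith
  have hPn : (0:ℝ) < P ^ n := by positivity
  have hC : (0:ℝ) < P^n*(P-1) := by nlinarith
  have h1 : P^n*(P-1)*(1-(m:ℝ)) ≤ P^n*(P-1)*w := mul_le_mul_of_nonneg_left hw hC.le
  have hid : ((P^n-1)/(P-1)*H - n - ((P^(n+1)-1)/(P-1)*H - (n+1))) * P^m
        + P^n*(P-1)*(1-(m:ℝ))
      - (((P^n-1)/(P-1)*H - n - ((P^(n+1)-1)/(P-1)*H - (n+1))) * P^n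
        + P^n*(P-1)*((P^n-1)/(P-1)*H - n))
      = (P^m - P^n) - (P^n*H)*(P^m - 1) + P^n*(P-1)*(1+(n:ℝ)-(m:ℝ)) := by
    field_simp
    ring
  have key : 0 < (P^m - P^n) - (P^n*H)*(P^m - 1) + P^n*(P-1)*(1+(n:ℝ)-(m:ℝ)) := by
    obtain ⟨d, rfl⟩ : ∃ d, m = n + 1 + d := ⟨m - n - 1, by omega⟩
    have hd1 : 1 ≤ d := by omega
    have hPm1 : (0:ℝ) ≤ P ^ (n+1+d) - 1 := by
      have : (1:ℝ) ≤ P ^ (n+1+d) := one_le_pow₀ (by linarith)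
      linarith
    have e1 : H * P^(n+1) * (P^(n+1+d) - 1) ≤ (P-1) * (P^(n+1+d) - 1) :=
      mul_le_mul_of_nonneg_right ht.le hPm1
    have hglb := geom_lb P hP d
    have e2 : P^(n+1) * ((d:ℝ)*(P-1)) ≤ P^(n+1) * (P^d - 1) :=
      mul_le_mul_of_nonneg_left hglb (by positivity)
    have hm1 : P^(n+1+d) = P^(n+1) * P^d := by rw [← pow_add]
    have hn1 : P^(n+1) = P^n * P := by rw [pow_succ]
    push_cast
    nlinarith [e1, e2, hm1, hn1, hPn, mul_pos hPn (show (0:ℝ) < P by linarith)]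
  linarith

/-- For data satisfying Hypotheses (H) with `g = 1` (write `U = U_1 = H`,
`u n = u n 1 1`), for `0 ≤ n < N` and `m ∉ {n, n+1}`, the point `(p^m, u_m)` lies
strictly above the line through `(p^n, u_n)` and `(p^{n+1}, u_{n+1})`:
`(u_n − u_{n+1})·p^m + p^n(p−1)·u_m > (u_n − u_{n+1})·p^n + p^n(p−1)·u_n` in `ℝ ∪ {+∞}`. -/
theorem newton_segment_is_cell (p N : ℕ) (hp : p.Prime) (hN : 1 ≤ N) (H : ℝ)
    (U : Fin 1 → ℝ) (u : ℕ → Fin 1 → Fin 1 → EReal)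
    (hH0 : 0 ≤ H) (hHN : H < ((p : ℝ) - 1) / (p : ℝ) ^ N)
    (hU0 : ∀ i, 0 ≤ U i) (hUsum : ∑ i, U i = H)
    (hu : SatisfiesHyp p U u) :
    ∀ n m : ℕ, n < N → m ≠ n → m ≠ n + 1 →
      (u n 0 0 - u (n + 1) 0 0) * (((p : ℝ) ^ m : ℝ) : EReal)
          + (((p : ℝ) ^ n * ((p : ℝ) - 1) : ℝ) : EReal) * u m 0 0
        > (u n 0 0 - u (n + 1) 0 0) * (((p : ℝ) ^ n : ℝ) : EReal)
          + (((p : ℝ) ^ n * ((p : ℝ) - 1) : ℝ) : EReal) * u n 0 0 := by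
  obtain ⟨h0, -, h2, h3, h4, -⟩ := hu
  have hU : U 0 = H := by simpa using hUsum
  have hp2 : (2:ℝ) ≤ (p:ℝ) := by exact_mod_cast hp.two_le
  set P : ℝ := (p:ℝ) with hPdef
  have hP1 : (1:ℝ) < P := by linarith
  -- for k ≤ N, (P^k-1)/(P-1) * H < 1
  have hc : ∀ k, k ≤ N → (P ^ k - 1)/(P - 1) * H < 1 := by
    intro k hk
    have hck : 0 ≤ (P ^ k - 1)/(P - 1) := by
      have : (1:ℝ) ≤ P ^ k := one_le_pow₀ (by linarith)
      exact div_nonneg (by linarith) (by linarith)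
    calc (P ^ k - 1)/(P - 1) * H ≤ (P ^ k - 1)/(P - 1) * ((P - 1)/P ^ N) :=
          mul_le_mul_of_nonneg_left hHN.le hck
      _ = (P ^ k - 1)/P ^ N := by
          rw [div_mul_div_comm, mul_comm (P - 1), ← div_mul_div_comm, div_self (by linarith)]
          ring
      _ < 1 := by
          rw [div_lt_one (by positivity)]
          have : P ^ k ≤ P ^ N := pow_le_pow_right₀ (by linarith) hk
          linarith
  -- exact value of u k when (P^k-1)/(P-1)*H < 1
  have hval : ∀ k, (P ^ k - 1)/(P - 1) * H < 1 →
      u k 0 0 = (((P ^ k - 1)/(P - 1) * H - k : ℝ) : EReal) := by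
    intro k hk
    rcases Nat.eq_zero_or_pos k with rfl | hk1
    · rw [h0 0]
      norm_num
    · rw [h2 0 k hk1 (by rw [hU]; exact hk), hU]
  intro n m hn hm1 hm2
  have hun : u n 0 0 = (((P ^ n - 1)/(P - 1) * H - n : ℝ) : EReal) :=
    hval n (hc n hn.le)
  have hun1 : u (n+1) 0 0 = (((P ^ (n+1) - 1)/(P - 1) * H - (n+1) : ℝ) : EReal) := by
    have := hval (n+1) (hc (n+1) hn)
    rw [this]
    push_cast
    ring_nf
  rw [hun, hun1, ← EReal.coe_sub]
  set A : ℝ := (P ^ n - 1)/(P - 1) * H - n - ((P ^ (n+1) - 1)/(P - 1) * H - (n+1)) with hA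
  by_cases htop : u m 0 0 = ⊤
  · have hC : (0:EReal) < ((P ^ n * (P - 1) : ℝ) : EReal) := by
      have hc' : (0:ℝ) < P ^ n * (P - 1) :=
        mul_pos (pow_pos (by linarith) n) (by linarith)
      exact_mod_cast hc'
    rw [htop, EReal.mul_top_of_pos hC, ← EReal.coe_mul,
      EReal.add_top_of_ne_bot (EReal.coe_ne_bot _), gt_iff_lt, ← EReal.coe_mul,
      ← EReal.coe_mul, ← EReal.coe_add]
    exact EReal.coe_lt_top _
  · have hbot : u m 0 0 ≠ ⊥ := ((EReal.bot_lt_coe _).trans_le (h4 0 0 m)).ne'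
    set w : ℝ := (u m 0 0).toReal with hwdef
    have hw : (w : EReal) = u m 0 0 := EReal.coe_toReal htop hbot
    rw [← hw, ← EReal.coe_mul, ← EReal.coe_mul, ← EReal.coe_mul, ← EReal.coe_mul,
      ← EReal.coe_add, ← EReal.coe_add, gt_iff_lt, EReal.coe_lt_coe_iff]
    have hmn : m < n ∨ n + 1 < m := by omega
    by_cases hcm : (P ^ m - 1)/(P - 1) * H < 1
    · have hwm : w = (P ^ m - 1)/(P - 1) * H - m := by
        have := hval m hcm
        rw [← hw] at this
        exact_mod_cast this
      rw [hwm, hA]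
      exact case_a P H hp2 n m hmn
    · have hmN : N < m := by
        by_contra hmN
        exact hcm (hc m (by omega))
      have hm2' : n + 2 ≤ m := by omega
      have hwge : 1 - (m:ℝ) ≤ w := by
        have := h3 0 m (by rw [hU]; linarith)
        rw [← hw] at this
        exact_mod_cast this
      have ht : H * P ^ (n+1) < P - 1 := by
        have h5 : H * P ^ N < P - 1 := by
          have := mul_lt_mul_of_pos_right hHN (show (0:ℝ) < P ^ N by positivity)
          rwa [div_mul_cancel₀ _ (by positivity : (P:ℝ) ^ N ≠ 0)] at this
        have h6 : P ^ (n+1) ≤ P ^ N := pow_le_pow_right₀ (by linarith) hn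
        nlinarith [pow_pos (show (0:ℝ) < P by linarith) (n+1)]
      rw [hA]
      exact case_b P H hp2 n m hm2' ht w hwge
end
end

section
/- Suppose the data (u_{n,i,j}, N, H, U_i) satisfy Hypotheses (H) with g = 1 (write U = U_1 = H and u_n = u_{n,1,1}). Let r = 1/(p^N(p−1)) and, for 1 ≤ m ≤ N, let c_m = 1/(p^{m−1}(p−1)) − U/(p−1). Then for every real number x > r: the minimum of the set {p^n·x + u_n : n ≥ 0} (which is a real number, attained at some n, since p^n·x + u_n ≥ p^n·x − n → +∞) is attained at two or more distinct indices n if and only if x = c_m for some integer 1 ≤ m ≤ N; moreover, when x = c_m the minimum is attained exactly at the two indices n = m−1 and n = m. -/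
open scoped BigOperators

noncomputable section

/-- The value `p^n·x + u_n ∈ ℝ ∪ {+∞}` (for `g = 1`). -/
def tropVal₁ (p : ℕ) (u : ℕ → Fin 1 → Fin 1 → EReal) (x : ℝ) (n : ℕ) : EReal :=
  (((p : ℝ) ^ n * x : ℝ) : EReal) + u n 0 0

/-- The slope `c_m = 1/(p^{m−1}(p−1)) − U/(p−1)` (here with `U = H`). -/
def tropSlope (p : ℕ) (H : ℝ) (m : ℕ) : ℝ :=
  1 / ((p : ℝ) ^ (m - 1) * ((p : ℝ) - 1)) - H / ((p : ℝ) - 1)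

private lemma chainLE (F : ℕ → ℝ) {a : ℕ} :
    ∀ {b : ℕ}, a ≤ b → (∀ j, a ≤ j → j < b → F (j + 1) ≤ F j) → F b ≤ F a := by
  intro b hab
  induction b, hab using Nat.le_induction with
  | base => exact fun _ => le_rfl
  | succ n hn ih =>
    intro h
    exact (h n hn (by omega)).trans (ih fun j hj hj' => h j hj (by omega))

private lemma chainLT (F : ℕ → ℝ) {a : ℕ} :
    ∀ {b : ℕ}, a < b → (∀ j, a ≤ j → j < b → F (j + 1) < F j) → F b < F a := by
  intro b hab
  induction b, hab using Nat.le_induction with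
  | base => exact fun h => h a le_rfl (by omega)
  | succ n hn ih =>
    intro h
    exact (h n (by omega) (by omega)).trans (ih fun j hj hj' => h j hj (by omega))

set_option maxHeartbeats 2000000 in
/-- For data satisfying Hypotheses (H) with `g = 1` (so `U = U_1 = H`), let
`r = 1/(p^N(p−1))`.  For every real `x > r`: the minimum of
`{p^n·x + u_n : n ≥ 0}` is attained at two or more distinct indices iff
`x = c_m` for some `1 ≤ m ≤ N`; and when `x = c_m` the minimizers are exactly
`n = m−1` and `n = m`. -/
theorem tropicalization_dim_one (p N : ℕ) (hp : p.Prime) (hN : 1 ≤ N) (H : ℝ)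
    (U : Fin 1 → ℝ) (u : ℕ → Fin 1 → Fin 1 → EReal)
    (hH0 : 0 ≤ H) (hHN : H < ((p : ℝ) - 1) / (p : ℝ) ^ N)
    (hU0 : ∀ i, 0 ≤ U i) (hUsum : ∑ i, U i = H)
    (hu : SatisfiesHyp p U u)
    (x : ℝ) (hx : 1 / ((p : ℝ) ^ N * ((p : ℝ) - 1)) < x) :
    ((∃ n n' : ℕ, n ≠ n' ∧ (∀ k, tropVal₁ p u x n ≤ tropVal₁ p u x k) ∧
        (∀ k, tropVal₁ p u x n' ≤ tropVal₁ p u x k)) ↔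
      ∃ m : ℕ, 1 ≤ m ∧ m ≤ N ∧ x = tropSlope p H m) ∧
    (∀ m : ℕ, 1 ≤ m → m ≤ N → x = tropSlope p H m →
      ∀ k : ℕ, (∀ k', tropVal₁ p u x k ≤ tropVal₁ p u x k') ↔ (k = m - 1 ∨ k = m)) := by

  classical
  obtain ⟨h1, h2, h3, h4, h5, h6⟩ := hu
  have HU : U 0 = H := by simpa using hUsum
  set q : ℝ := (p : ℝ) with hq
  have hq2 : (2:ℝ) ≤ q := by rw [hq]; exact_mod_cast hp.two_le
  have hq1 : (1:ℝ) < q := by linarith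
  have hq0 : (0:ℝ) < q := by linarith
  have hqm : (0:ℝ) < q - 1 := by linarith
  have hqNpos : ∀ k : ℕ, (0:ℝ) < q ^ k := fun k => pow_pos hq0 k
  have hr : (0:ℝ) < 1 / (q ^ N * (q - 1)) := by positivity
  have hx0 : 0 < x := lt_trans hr hx
  set t : ℝ := (q - 1) * x + H with hT
  have ht : 0 < t := by nlinarith
  set F : ℕ → ℝ := fun k => q ^ k * x + (q ^ k - 1) / (q - 1) * H - k with hF
  have hsmono : ∀ {k l : ℕ}, k ≤ l → (q ^ k - 1) / (q - 1) ≤ (q ^ l - 1) / (q - 1) := by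
    intro k l hkl
    have h := pow_le_pow_right₀ (le_of_lt hq1) hkl
    gcongr
  have hsH : ∀ k, k ≤ N → (q ^ k - 1) / (q - 1) * H < 1 := by
    intro k hk
    have hsNpos : (0:ℝ) < (q ^ N - 1) / (q - 1) := by
      have h1N : (1:ℝ) < q ^ N := one_lt_pow₀ hq1 (by omega)
      exact div_pos (by linarith) hqm
    have hlt : (q ^ N - 1) / (q - 1) * H < (q ^ N - 1) / (q - 1) * ((q - 1) / q ^ N) :=
      mul_lt_mul_of_pos_left hHN hsNpos
    have heq : (q ^ N - 1) / (q - 1) * ((q - 1) / q ^ N) = (q ^ N - 1) / q ^ N := by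
      field_simp
    have hlast : (q ^ N - 1) / q ^ N < 1 := by
      rw [div_lt_one (hqNpos N)]; linarith
    have hmon : (q ^ k - 1) / (q - 1) * H ≤ (q ^ N - 1) / (q - 1) * H :=
      mul_le_mul_of_nonneg_right (hsmono hk) hH0
    calc (q ^ k - 1) / (q - 1) * H ≤ (q ^ N - 1) / (q - 1) * H := hmon
      _ < (q ^ N - 1) / (q - 1) * ((q - 1) / q ^ N) := hlt
      _ = (q ^ N - 1) / q ^ N := heq
      _ < 1 := hlast
  have hval : ∀ k : ℕ, (q ^ k - 1) / (q - 1) * H < 1 →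
      tropVal₁ p u x k = ((F k : ℝ) : EReal) := by
    intro k hk
    simp only [tropVal₁, ← hq]
    rcases Nat.eq_zero_or_pos k with rfl | hk1
    · rw [h1 0]
      have : F 0 = x := by simp [hF]
      rw [this]
      simp
    · rw [h3 0 k hk1 (by rw [HU]; exact hk)]
      rw [← EReal.coe_add, EReal.coe_eq_coe_iff]
      rw [HU]
      simp only [hF]
      ring
  have hdiff : ∀ k : ℕ, F (k + 1) - F k = q ^ k * t - 1 := by
    intro k
    simp only [hF, hT]
    push_cast
    field_simp
    ring
  have hDN : 1 < q ^ N * t := by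
    have hA : (0:ℝ) < q ^ N * (q - 1) := by positivity
    have h' := mul_lt_mul_of_pos_left hx hA
    have e : q ^ N * (q - 1) * (1 / (q ^ N * (q - 1))) = 1 := by field_simp
    rw [e] at h'
    have hH' : 0 ≤ q ^ N * H := mul_nonneg (le_of_lt (hqNpos N)) hH0
    rw [hT]
    nlinarith
  have hcore : ∀ k : ℕ, N < k → (k : ℝ) - N < (q ^ k - q ^ N) * x := by
    intro k hk
    set c : ℕ := k - N with hc
    have hc1 : 1 ≤ c := by omega
    have hcR : (1:ℝ) ≤ (c : ℝ) := by exact_mod_cast hc1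
    have hb : (1 : ℝ) + (c : ℝ) * (q - 1) ≤ q ^ c := by
      have hber := one_add_mul_le_pow (a := q - 1) (by linarith) c
      have : (1:ℝ) + (q - 1) = q := by ring
      rwa [this] at hber
    have e1 : q ^ k = q ^ N * q ^ c := by
      rw [← pow_add]; congr 1; omega
    have hbound : q ^ N * (q - 1) * (c : ℝ) ≤ q ^ k - q ^ N := by
      rw [e1]
      nlinarith [hqNpos N]
    have hApos : (0:ℝ) < q ^ N * (q - 1) * (c : ℝ) := by positivity
    have h3' : (q ^ N * (q - 1) * (c : ℝ)) * (1 / (q ^ N * (q - 1))) <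
        (q ^ N * (q - 1) * (c : ℝ)) * x := mul_lt_mul_of_pos_left hx hApos
    have h4' : (q ^ N * (q - 1) * (c : ℝ)) * (1 / (q ^ N * (q - 1))) = (c : ℝ) := by
      field_simp
    have h5' : (q ^ N * (q - 1) * (c : ℝ)) * x ≤ (q ^ k - q ^ N) * x :=
      mul_le_mul_of_nonneg_right hbound (le_of_lt hx0)
    have hcast : (k : ℝ) - N = (c : ℝ) := by
      rw [hc]
      push_cast [Nat.cast_sub (le_of_lt hk)]
      ring
    rw [hcast]
    linarith
  have htail : ∀ k, N < k → ((F N : ℝ) : EReal) < tropVal₁ p u x k := by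
    intro k hk
    have hcore' := hcore k hk
    have hsNH : (q ^ N - 1) / (q - 1) * H < 1 := hsH N le_rfl
    rcases lt_or_ge ((q ^ k - 1) / (q - 1) * H) 1 with hc | hc
    · rw [hval k hc]
      rw [EReal.coe_lt_coe_iff]
      have hmon : (q ^ N - 1) / (q - 1) * H ≤ (q ^ k - 1) / (q - 1) * H :=
        mul_le_mul_of_nonneg_right (hsmono (le_of_lt hk)) hH0
      simp only [hF]
      linarith
    · have hu4 : ((1 - (k:ℝ) : ℝ) : EReal) ≤ u k 0 0 := by
        have := h4 0 k (by rw [HU]; exact hc)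
        exact_mod_cast this
      have hle : ((q ^ k * x + (1 - (k:ℝ)) : ℝ) : EReal) ≤ tropVal₁ p u x k := by
        simp only [tropVal₁, ← hq]
        rw [EReal.coe_add]
        exact add_le_add_right hu4 _
      refine lt_of_lt_of_le ?_ hle
      rw [EReal.coe_lt_coe_iff]
      simp only [hF]
      linarith
  have hminle : ∀ k, (∀ k', tropVal₁ p u x k ≤ tropVal₁ p u x k') → k ≤ N := by
    intro k hk
    by_contra hkN
    push_neg at hkN
    have hle := hk N
    rw [hval N (hsH N le_rfl)] at hle
    exact absurd (lt_of_le_of_lt hle (htail k hkN)) (lt_irrefl _)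
  have hslope : ∀ m' : ℕ, x = tropSlope p H (m' + 1) ↔ q ^ m' * t = 1 := by
    intro m'
    have hApos : (0:ℝ) < q ^ m' * (q - 1) := by positivity
    have hexp : tropSlope p H (m' + 1) = 1 / (q ^ m' * (q - 1)) - H / (q - 1) := by
      simp only [tropSlope, Nat.add_sub_cancel, ← hq]
    rw [hexp, hT]
    constructor
    · intro h
      rw [h]
      field_simp
      ring
    · intro h
      have hne1 : q ^ m' * (q - 1) ≠ 0 := ne_of_gt hApos
      have hne2 : q - 1 ≠ 0 := ne_of_gt hqm
      field_simp
      nlinarith [h]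
  -- part 2 (structure of minimizers at x = c_m)
  have hpart2 : ∀ m : ℕ, 1 ≤ m → m ≤ N → x = tropSlope p H m →
      ∀ k : ℕ, (∀ k', tropVal₁ p u x k ≤ tropVal₁ p u x k') ↔ (k = m - 1 ∨ k = m) := by
    intro m hm1 hmN hxm k
    obtain ⟨m', rfl⟩ : ∃ m', m = m' + 1 := ⟨m - 1, by omega⟩
    have hx1 : q ^ m' * t = 1 := (hslope m').mp hxm
    have hm'N : m' < N := by omega
    have hDlt : ∀ j, j < m' → q ^ j * t < 1 := by
      intro j hj
      have : q ^ j < q ^ m' := pow_lt_pow_right₀ hq1 hj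
      nlinarith
    have hDgt : ∀ j, m' < j → 1 < q ^ j * t := by
      intro j hj
      have : q ^ m' < q ^ j := pow_lt_pow_right₀ hq1 hj
      nlinarith
    have hFeq : F (m' + 1) = F m' := by
      have := hdiff m'
      linarith
    have hmin : ∀ k', k' ≤ N → F m' ≤ F k' := by
      intro k' hk'
      rcases le_or_gt k' m' with h | h
      · exact chainLE F h (fun j hj hj' => by
          have hd := hdiff j
          have := hDlt j hj'
          linarith)
      · have h2 : F (m' + 1) ≤ F k' := by
          rcases eq_or_lt_of_le (Nat.succ_le_of_lt h) with h' | h'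
          · exact le_of_eq (congrArg F (by omega))
          · have := chainLE (fun n => -F n) (le_of_lt h') (fun j hj hj' => by
              have hd := hdiff j
              have := hDgt j (by omega)
              linarith)
            simpa using this
        linarith [hFeq]
    have hstrict : ∀ k', k' ≤ N → k' ≠ m' → k' ≠ m' + 1 → F m' < F k' := by
      intro k' hk' hne1 hne2
      rcases lt_or_gt_of_ne hne1 with h | h
      · exact chainLT F h (fun j hj hj' => by
          have hd := hdiff j
          have := hDlt j hj'
          linarith)
      · have h' : m' + 1 < k' := by omega
        have := chainLT (fun n => -F n) h' (fun j hj hj' => by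
          have hd := hdiff j
          have := hDgt j (by omega)
          linarith)
        rw [← hFeq]
        linarith
    constructor
    · intro hk
      have hkN : k ≤ N := hminle k hk
      by_contra hcon
      push_neg at hcon
      obtain ⟨hc1, hc2⟩ := hcon
      have hc1' : k ≠ m' := by omega
      have hFle : F k ≤ F m' := by
        have := hk m'
        rw [hval k (hsH k hkN), hval m' (hsH m' (by omega))] at this
        exact_mod_cast this
      have := hstrict k hkN hc1' hc2
      linarith
    · intro hk k'
      have hkN : k ≤ N := by omega
      have hFk : F k = F m' := by
        rcases hk with rfl | rfl
        · simp
        · exact hFeq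
      rcases le_or_gt k' N with h | h
      · rw [hval k (hsH k hkN), hval k' (hsH k' h), EReal.coe_le_coe_iff, hFk]
        exact hmin k' h
      · rw [hval k (hsH k hkN)]
        refine le_of_lt (lt_of_le_of_lt ?_ (htail k' h))
        rw [EReal.coe_le_coe_iff, hFk]
        exact hmin N le_rfl
  refine ⟨⟨?_, ?_⟩, hpart2⟩
  · rintro ⟨n, n', hne, hn, hn'⟩
    have main : ∀ a b : ℕ, a < b → (∀ k, tropVal₁ p u x a ≤ tropVal₁ p u x k) →
        (∀ k, tropVal₁ p u x b ≤ tropVal₁ p u x k) →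
        ∃ m : ℕ, 1 ≤ m ∧ m ≤ N ∧ x = tropSlope p H m := by
      intro a b hab ha hb
      have haN : a ≤ N := hminle a ha
      have hbN : b ≤ N := hminle b hb
      obtain ⟨c, rfl⟩ : ∃ c, b = c + 1 := ⟨b - 1, by omega⟩
      have hFa : F a ≤ F (a + 1) := by
        have := ha (a + 1)
        rw [hval a (hsH a haN), hval (a + 1) (hsH (a + 1) (by omega))] at this
        exact_mod_cast this
      have hFb : F (c + 1) ≤ F c := by
        have := hb c
        rw [hval (c + 1) (hsH (c + 1) hbN), hval c (hsH c (by omega))] at this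
        exact_mod_cast this
      have hDa : 0 ≤ q ^ a * t - 1 := by
        have := hdiff a; linarith
      have hDc : q ^ c * t - 1 ≤ 0 := by
        have := hdiff c; linarith
      have hac : a = c := by
        by_contra hne'
        have hlt : a < c := by omega
        have : q ^ a < q ^ c := pow_lt_pow_right₀ hq1 hlt
        nlinarith
      subst hac
      have hx1 : q ^ a * t = 1 := by linarith
      exact ⟨a + 1, by omega, by omega, (hslope a).mpr hx1⟩
    rcases hne.lt_or_gt with h | h
    · exact main n n' h hn hn'
    · exact main n' n h hn' hn
  · rintro ⟨m, hm1, hmN, hxm⟩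
    refine ⟨m - 1, m, by omega, ?_, ?_⟩
    · exact (hpart2 m hm1 hmN hxm (m - 1)).mpr (Or.inl rfl)
    · exact (hpart2 m hm1 hmN hxm m).mpr (Or.inr rfl)
end
end

section
/- Suppose the data (u_{n,i,j}, N, H, U_i) satisfy Hypotheses (H). Fix i ∈ {1,…,g} and a point x = (x_1,…,x_g) ∈ ℝ^g with x_k > 1/(p^N(p−1)) for every k. If there exist an integer m ≥ 0 and an index j ≠ i such that p^m·x_j + u_{m,i,j} ≤ p^n·x_i + u_{n,i,i} for all integers n ≥ 0 (inequalities in ℝ ∪ {+∞}), then x_i − x_j ≥ ε/p^N − U_i/(p−1), where ε = 1 if i > j and ε = 0 if i < j. -/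
open scoped BigOperators

noncomputable section

/-- (Proposition on off-diagonal dominance.)  Suppose the data satisfy
Hypotheses (H).  Fix `i` and `x ∈ ℝ^g` with all `x_k > 1/(p^N(p−1))`.  If there
are `m ≥ 0` and `j ≠ i` with `p^m·x_j + u_{m,i,j} ≤ p^n·x_i + u_{n,i,i}` for all
`n ≥ 0`, then `x_i − x_j ≥ ε/p^N − U_i/(p−1)` where `ε = 1` if `i > j`, else `0`. -/
theorem trop_diagonal_escape (p N g : ℕ) (hp : p.Prime) (hN : 1 ≤ N) (hg : 1 ≤ g) (H : ℝ)
    (U : Fin g → ℝ) (u : ℕ → Fin g → Fin g → EReal)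
    (hH0 : 0 ≤ H) (hHN : H < ((p : ℝ) - 1) / (p : ℝ) ^ N)
    (hU0 : ∀ i, 0 ≤ U i) (hUsum : ∑ i, U i = H)
    (hu : SatisfiesHyp p U u)
    (x : Fin g → ℝ) (hx : ∀ k, 1 / ((p : ℝ) ^ N * ((p : ℝ) - 1)) < x k) :
    ∀ (i j : Fin g) (m : ℕ), j ≠ i →
      (∀ n : ℕ, (((p : ℝ) ^ m * x j : ℝ) : EReal) + u m i j
          ≤ (((p : ℝ) ^ n * x i : ℝ) : EReal) + u n i i) →
      (if j < i then (1 : ℝ) else 0) / (p : ℝ) ^ N - U i / ((p : ℝ) - 1) ≤ x i - x j := by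
  intro i j m hji hmain
  obtain ⟨h1, h2, h3, h4, h5, h6⟩ := hu
  have hp2 : (2:ℝ) ≤ (p:ℝ) := by exact_mod_cast hp.two_le
  have hp1 : (1:ℝ) < (p:ℝ) := by linarith
  have h10 : (p:ℝ) - 1 ≠ 0 := by linarith
  have hpN : (0:ℝ) < (p:ℝ)^N := by positivity
  have hpN0 : ((p:ℝ)^N : ℝ) ≠ 0 := ne_of_gt hpN
  have hpN1 : (1:ℝ) < (p:ℝ)^N := by
    calc (1:ℝ) < (p:ℝ) := hp1
    _ = (p:ℝ)^1 := (pow_one _).symm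
    _ ≤ (p:ℝ)^N := pow_le_pow_right₀ (le_of_lt hp1) hN
  have hUi : 0 ≤ U i := hU0 i
  have hUH : U i ≤ H := by
    rw [← hUsum]
    exact Finset.single_le_sum (fun k _ => hU0 k) (Finset.mem_univ i)
  have hNi : ∀ n, n ≤ N → ((p:ℝ)^n - 1)/((p:ℝ)-1) * U i < 1 := by
    intro n hn
    have hpow : (p:ℝ)^n ≤ (p:ℝ)^N := pow_le_pow_right₀ (le_of_lt hp1) hn
    have hfac : ((p:ℝ)^n - 1)/((p:ℝ)-1) ≤ ((p:ℝ)^N - 1)/((p:ℝ)-1) :=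
      div_le_div_of_nonneg_right (by linarith) (by linarith)
    have hfacN : (0:ℝ) < ((p:ℝ)^N - 1)/((p:ℝ)-1) := by
      apply div_pos <;> linarith
    calc ((p:ℝ)^n - 1)/((p:ℝ)-1) * U i ≤ ((p:ℝ)^N - 1)/((p:ℝ)-1) * H :=
          mul_le_mul hfac hUH hUi (le_of_lt hfacN)
      _ < ((p:ℝ)^N - 1)/((p:ℝ)-1) * (((p:ℝ)-1)/(p:ℝ)^N) :=
          mul_lt_mul_of_pos_left hHN hfacN
      _ = ((p:ℝ)^N - 1)/(p:ℝ)^N := by field_simp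
      _ < 1 := by rw [div_lt_one hpN]; linarith
  have hdiag : ∀ n, n ≤ N → u n i i = ((((p:ℝ)^n - 1)/((p:ℝ)-1)*U i - n : ℝ) : EReal) := by
    intro n hn
    rcases Nat.eq_zero_or_pos n with h0 | h0
    · subst h0
      rw [h1 i]
      norm_num
    · exact h3 i n h0 (hNi n hn)
  set ε : ℝ := if j < i then (1:ℝ) else 0 with hεdef
  have hε0 : 0 ≤ ε := by rw [hεdef]; split <;> norm_num
  have hε1 : ε ≤ 1 := by rw [hεdef]; split <;> norm_num
  have hlb : ((ε - m : ℝ) : EReal) ≤ u m i j := by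
    by_cases hlt : j < i
    · rw [hεdef, if_pos hlt]
      exact h6 i j m hlt
    · rw [hεdef, if_neg hlt]
      have := h5 i j m
      convert this using 2
      ring
  set V : ℝ := U i / ((p:ℝ)-1) with hVdef
  have hV0 : 0 ≤ V := by
    apply div_nonneg hUi; linarith
  rcases le_or_gt m N with hmN | hmN
  · -- case m ≤ N : use n = m
    have hm := hmain m
    rw [hdiag m hmN] at hm
    have hchain : ((((p:ℝ)^m * x j) + (ε - m) : ℝ) : EReal)
        ≤ ((((p:ℝ)^m * x i) + (((p:ℝ)^m - 1)/((p:ℝ)-1)*U i - m) : ℝ) : EReal) := by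
      rw [EReal.coe_add, EReal.coe_add]
      calc (((p:ℝ)^m * x j : ℝ) : EReal) + ((ε - m : ℝ) : EReal)
          ≤ (((p:ℝ)^m * x j : ℝ) : EReal) + u m i j := add_le_add_right hlb _
        _ ≤ _ := hm
    have hreal := EReal.coe_le_coe_iff.mp hchain
    have hVeq : ((p:ℝ)^m - 1)/((p:ℝ)-1)*U i = ((p:ℝ)^m - 1) * V := by
      rw [hVdef]; ring
    rw [hVeq] at hreal
    have hk : ε - ((p:ℝ)^m - 1) * V ≤ (p:ℝ)^m * (x i - x j) := by nlinarith [hreal]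
    have ha0 : (0:ℝ) < (p:ℝ)^m := by positivity
    have ha1 : (1:ℝ) ≤ (p:ℝ)^m := one_le_pow₀ (le_of_lt hp1)
    have hab : (p:ℝ)^m ≤ (p:ℝ)^N := pow_le_pow_right₀ (le_of_lt hp1) hmN
    rw [sub_le_iff_le_add, div_le_iff₀ hpN]
    nlinarith [mul_le_mul_of_nonneg_left hk (le_of_lt hpN),
      mul_nonneg (sub_nonneg.2 hab) hε0, mul_nonneg (le_of_lt hpN) hV0, ha0, hpN]
  · -- case m > N : use n = N
    have hm := hmain N
    rw [hdiag N le_rfl] at hm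
    have hchain : ((((p:ℝ)^m * x j) + (ε - m) : ℝ) : EReal)
        ≤ ((((p:ℝ)^N * x i) + (((p:ℝ)^N - 1)/((p:ℝ)-1)*U i - N) : ℝ) : EReal) := by
      rw [EReal.coe_add, EReal.coe_add]
      calc (((p:ℝ)^m * x j : ℝ) : EReal) + ((ε - m : ℝ) : EReal)
          ≤ (((p:ℝ)^m * x j : ℝ) : EReal) + u m i j := add_le_add_right hlb _
        _ ≤ _ := hm
    have hreal := EReal.coe_le_coe_iff.mp hchain
    obtain ⟨d, rfl⟩ : ∃ d, m = N + d := ⟨m - N, by omega⟩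
    have hd1 : 1 ≤ d := by omega
    have hVeq : ((p:ℝ)^N - 1)/((p:ℝ)-1)*U i = ((p:ℝ)^N - 1) * V := by
      rw [hVdef]; ring
    rw [hVeq] at hreal
    push_cast at hreal
    have hber : 1 + (d:ℝ)*((p:ℝ)-1) ≤ (p:ℝ)^d := by
      calc 1 + (d:ℝ)*((p:ℝ)-1) ≤ (1 + ((p:ℝ)-1))^d :=
            one_add_mul_le_pow (by linarith : (-2:ℝ) ≤ (p:ℝ)-1) d
        _ = (p:ℝ)^d := by ring_nf
    have hABd : (p:ℝ)^N * ((d:ℝ)*((p:ℝ)-1)) ≤ (p:ℝ)^(N+d) - (p:ℝ)^N := by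
      rw [pow_add]
      nlinarith [hber, hpN]
    have hab0 : (0:ℝ) ≤ (p:ℝ)^(N+d) - (p:ℝ)^N := by
      have : (0:ℝ) ≤ (p:ℝ)^N * ((d:ℝ)*((p:ℝ)-1)) :=
        mul_nonneg (le_of_lt hpN) (mul_nonneg (Nat.cast_nonneg d) (by linarith))
      linarith
    have hxjL : ((p:ℝ)^(N+d) - (p:ℝ)^N) * (1/((p:ℝ)^N*((p:ℝ)-1)))
        ≤ ((p:ℝ)^(N+d) - (p:ℝ)^N) * x j :=
      mul_le_mul_of_nonneg_left (le_of_lt (hx j)) hab0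
    have hdle : (d:ℝ) ≤ ((p:ℝ)^(N+d) - (p:ℝ)^N) * (1/((p:ℝ)^N*((p:ℝ)-1))) := by
      rw [mul_one_div, le_div_iff₀ (mul_pos hpN (by linarith : (0:ℝ) < (p:ℝ)-1))]
      linarith [hABd]
    rw [sub_le_iff_le_add, div_le_iff₀ hpN]
    linarith [hreal, hxjL, hdle, hV0]
end
end

section
/- Suppose the data (u_{n,i,j}, N, H, U_i) satisfy Hypotheses (H). Let r = 1/(p^N(p−1)) and r' = 1/(p^{N−1}(p−1)) − H/(p−1), so r' > r. For x = (x_1,…,x_g) ∈ ℝ^g with all x_k > 0 and for i ∈ {1,…,g}, say that i is tropical at x if the minimum of the set {p^n·x_j + u_{n,i,j} : n ≥ 0, 1 ≤ j ≤ g} (a real number, attained since the values tend to +∞) is attained at two or more distinct pairs (n, j). Then: (a) if every i ∈ {1,…,g} is tropical at x and x_k > r for all k, then x_k ≥ r' for all k; (b) there is no x with x_k > 1/(p−1) for all k at which every i ∈ {1,…,g} is tropical. -/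
open scoped BigOperators

noncomputable section

/-- The value `p^n·x_j + u_{n,i,j} ∈ ℝ ∪ {+∞}` at the pair `q = (n, j)`. -/
def tropVal (p : ℕ) {g : ℕ} (u : ℕ → Fin g → Fin g → EReal) (x : Fin g → ℝ)
    (i : Fin g) (q : ℕ × Fin g) : EReal :=
  (((p : ℝ) ^ q.1 * x q.2 : ℝ) : EReal) + u q.1 i q.2

/-- `i` is tropical at `x`: the minimum of `{p^n·x_j + u_{n,i,j}}` is attained at
two or more distinct pairs `(n, j)`. -/
def TropicalAt (p : ℕ) {g : ℕ} (u : ℕ → Fin g → Fin g → EReal) (x : Fin g → ℝ)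
    (i : Fin g) : Prop :=
  ∃ q q' : ℕ × Fin g, q ≠ q' ∧ (∀ q'', tropVal p u x i q ≤ tropVal p u x i q'') ∧
    (∀ q'', tropVal p u x i q' ≤ tropVal p u x i q'')

private lemma geom_lb_s5 {π : ℝ} (hπ : 1 < π) : ∀ q : ℕ, (q : ℝ) * (π - 1) ≤ π ^ q - 1 := by
  intro q
  induction q with
  | zero => simp
  | succ n ih =>
    have h0 : (0:ℝ) ≤ π := le_of_lt (lt_trans zero_lt_one hπ)
    have h3 := mul_le_mul_of_nonneg_right ih h0
    have hπ1 : (0:ℝ) ≤ π - 1 := by linarith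
    have h4 : 0 ≤ (n:ℝ) * (π - 1) * (π - 1) :=
      mul_nonneg (mul_nonneg (Nat.cast_nonneg n) hπ1) hπ1
    rw [pow_succ]
    push_cast
    nlinarith [h3, h4]

private lemma geom_ub_s5 {π : ℝ} (hπ : 1 < π) : ∀ q : ℕ, π ^ (q+1) - 1 ≤ ((q:ℝ)+1) * π ^ q * (π - 1) := by
  intro q
  induction q with
  | zero => norm_num
  | succ n ih =>
    have h0 : (0:ℝ) ≤ π := le_of_lt (lt_trans zero_lt_one hπ)
    have h2 : (1:ℝ) ≤ π ^ (n+1) := one_le_pow₀ hπ.le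
    have h5 : (π - 1) ≤ π ^ (n+1) * (π - 1) := by nlinarith [h2]
    have hd := mul_le_mul_of_nonneg_left ih h0
    have he : π*(((n:ℝ)+1) * π ^ n * (π-1)) = ((n:ℝ)+1)*π^(n+1)*(π-1) := by
      rw [pow_succ]; ring
    rw [he] at hd
    have hc : π ^ (n+1+1) - 1 = π*(π^(n+1) - 1) + (π - 1) := by rw [pow_succ (π) (n+1)]; ring
    push_cast
    linarith [hd, h5, hc.le, hc.ge]

private lemma row_min (p : ℕ) {g : ℕ} (U : Fin g → ℝ) (u : ℕ → Fin g → Fin g → EReal)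
    (hu : SatisfiesHyp p U u) (x : Fin g → ℝ) (i : Fin g)
    (h : TropicalAt p u x i) :
    ∃ (n n' : ℕ) (j j' : Fin g) (c c' : ℝ),
      ((n, j) ≠ (n', j')) ∧
      u n i j = (c : EReal) ∧ u n' i j' = (c' : EReal) ∧
      (j ≠ i → 1 ≤ n) ∧ (j' ≠ i → 1 ≤ n') ∧
      (∀ (m : ℕ) (l : Fin g) (d : ℝ), u m i l = (d : EReal) →
        (p:ℝ)^n * x j + c ≤ (p:ℝ)^m * x l + d) ∧
      (∀ (m : ℕ) (l : Fin g) (d : ℝ), u m i l = (d : EReal) →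
        (p:ℝ)^n' * x j' + c' ≤ (p:ℝ)^m * x l + d) := by
  obtain ⟨q, q', hne, hq, hq'⟩ := h
  have hvi : tropVal p u x i (0, i) = ((x i : ℝ) : EReal) := by
    simp [tropVal, hu.1 i]
  have extract : ∀ qq : ℕ × Fin g, (∀ q'', tropVal p u x i qq ≤ tropVal p u x i q'') →
      ∃ c : ℝ, u qq.1 i qq.2 = (c : EReal) ∧ (qq.2 ≠ i → 1 ≤ qq.1) ∧
        (∀ (m : ℕ) (l : Fin g) (d : ℝ), u m i l = (d : EReal) →
          (p:ℝ)^qq.1 * x qq.2 + c ≤ (p:ℝ)^m * x l + d) := by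
    rintro ⟨n, j⟩ hm
    have hb : tropVal p u x i (n, j) ≤ ((x i : ℝ) : EReal) := hvi ▸ hm (0, i)
    have hne_top : u n i j ≠ ⊤ := by
      intro ht
      rw [tropVal, ht, EReal.add_top_of_ne_bot (EReal.coe_ne_bot _)] at hb
      exact (EReal.coe_lt_top (x i)).not_ge hb
    have hne_bot : u n i j ≠ ⊥ := by
      intro hbt
      have := hu.2.2.2.2.1 i j n
      rw [hbt, le_bot_iff] at this
      exact EReal.coe_ne_bot _ this
    refine ⟨(u n i j).toReal, (EReal.coe_toReal hne_top hne_bot).symm, ?_, ?_⟩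
    · intro hji
      by_contra hn
      have hn0 : n = 0 := by omega
      have := hu.2.1 i j (Ne.symm hji)
      rw [hn0] at hne_top
      exact hne_top this
    · intro m l d hd
      have h2 := hm (m, l)
      rw [tropVal, tropVal, hd, (EReal.coe_toReal hne_top hne_bot).symm] at h2
      rw [← EReal.coe_add, ← EReal.coe_add] at h2
      exact EReal.coe_le_coe_iff.mp h2
  obtain ⟨c, hc, hc1, hccmp⟩ := extract q hq
  obtain ⟨c', hc', hc'1, hc'cmp⟩ := extract q' hq'
  exact ⟨q.1, q'.1, q.2, q'.2, c, c', by simpa using hne, hc, hc', hc1, hc'1, hccmp, hc'cmp⟩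



set_option maxHeartbeats 1000000 in
/-- (Theorem on properness of the tropicalization.)  Let `r = 1/(p^N(p−1))` and
`r' = 1/(p^{N−1}(p−1)) − H/(p−1)`, so `r' > r`.  (a) If every `i` is tropical at
`x` and all `x_k > r`, then all `x_k ≥ r'`.  (b) There is no `x` with all
`x_k > 1/(p−1)` at which every `i` is tropical. -/
theorem trop_properness (p N g : ℕ) (hp : p.Prime) (hN : 1 ≤ N) (hg : 1 ≤ g) (H : ℝ)
    (U : Fin g → ℝ) (u : ℕ → Fin g → Fin g → EReal)
    (hH0 : 0 ≤ H) (hHN : H < ((p : ℝ) - 1) / (p : ℝ) ^ N)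
    (hU0 : ∀ i, 0 ≤ U i) (hUsum : ∑ i, U i = H)
    (hu : SatisfiesHyp p U u) :
    (1 / ((p : ℝ) ^ N * ((p : ℝ) - 1))
        < 1 / ((p : ℝ) ^ (N - 1) * ((p : ℝ) - 1)) - H / ((p : ℝ) - 1)) ∧
    (∀ x : Fin g → ℝ, (∀ k, 0 < x k) →
      (∀ k, 1 / ((p : ℝ) ^ N * ((p : ℝ) - 1)) < x k) →
      (∀ i, TropicalAt p u x i) →
      ∀ k, 1 / ((p : ℝ) ^ (N - 1) * ((p : ℝ) - 1)) - H / ((p : ℝ) - 1) ≤ x k) ∧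
    ¬ ∃ x : Fin g → ℝ, (∀ k, 1 / ((p : ℝ) - 1) < x k) ∧ ∀ i, TropicalAt p u x i := by
  classical
  obtain ⟨M, rfl⟩ : ∃ M, N = M + 1 := ⟨N - 1, by omega⟩
  simp only [Nat.add_sub_cancel]
  have hπ : (1:ℝ) < (p:ℝ) := by exact_mod_cast hp.one_lt
  have hπ0 : (0:ℝ) < (p:ℝ) := lt_trans zero_lt_one hπ
  have hπ1 : (0:ℝ) < (p:ℝ) - 1 := by linarith
  have hppos : ∀ m : ℕ, (0:ℝ) < (p:ℝ)^m := fun m => pow_pos hπ0 m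
  have hpone : ∀ m : ℕ, (1:ℝ) ≤ (p:ℝ)^m := fun m => one_le_pow₀ hπ.le
  have hUH : ∀ i, U i ≤ H := by
    intro i; rw [← hUsum]
    exact Finset.single_le_sum (fun j _ => hU0 j) (Finset.mem_univ i)
  have hu00 : ∀ i : Fin g, u 0 i i = ((0:ℝ) : EReal) := by
    intro i; rw [hu.1 i, EReal.coe_zero]
  refine ⟨?_, ?_, ?_⟩
  · -- part 1 : r < r'
    have h1 : H * (p:ℝ)^(M+1) < (p:ℝ) - 1 := by
      rw [lt_div_iff₀ (hppos (M+1))] at hHN; exact hHN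
    have hkey : H / ((p:ℝ)-1) < 1/((p:ℝ)^(M+1)) := by
      rw [div_lt_div_iff₀ hπ1 (hppos (M+1))]; linarith
    have hid : 1/((p:ℝ)^M*((p:ℝ)-1)) - 1/((p:ℝ)^(M+1)*((p:ℝ)-1)) = 1/(p:ℝ)^(M+1) := by
      have h2 : ((p:ℝ)^M) ≠ 0 := ne_of_gt (hppos M)
      have h3 : ((p:ℝ)^(M+1)) ≠ 0 := ne_of_gt (hppos (M+1))
      have h4 : ((p:ℝ)-1) ≠ 0 := ne_of_gt hπ1
      field_simp
      ring
    linarith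
  · -- part (a)
    intro x hx0 hxr htrop
    -- abbreviations
    have hrpos : (0:ℝ) < 1/((p:ℝ)^(M+1)*((p:ℝ)-1)) := by positivity
    have hcstH : ((p:ℝ)^(M+1)-1)/((p:ℝ)-1)*H < 1 := by
      have h1 : ((p:ℝ)^(M+1)-1)/((p:ℝ)-1)*H ≤ ((p:ℝ)^(M+1)-1)/((p:ℝ)-1)*(((p:ℝ)-1)/(p:ℝ)^(M+1))
          ∨ ((p:ℝ)^(M+1)-1)/((p:ℝ)-1)*H < ((p:ℝ)^(M+1)-1)/((p:ℝ)-1)*(((p:ℝ)-1)/(p:ℝ)^(M+1)) := by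
        right
        apply mul_lt_mul_of_pos_left hHN
        apply div_pos _ hπ1
        have : (1:ℝ) < (p:ℝ)^(M+1) := one_lt_pow₀ hπ (by omega)
        linarith
      have h2 : ((p:ℝ)^(M+1)-1)/((p:ℝ)-1)*(((p:ℝ)-1)/(p:ℝ)^(M+1)) = ((p:ℝ)^(M+1)-1)/(p:ℝ)^(M+1) := by
        field_simp
      have h3 : ((p:ℝ)^(M+1)-1)/(p:ℝ)^(M+1) < 1 := by
        rw [div_lt_one (hppos (M+1))]; linarith
      rcases h1 with h1|h1 <;> linarith
    have hEavail : ∀ (i : Fin g) (m : ℕ), m ≤ M+1 → ((p:ℝ)^m-1)/((p:ℝ)-1)*U i < 1 := by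
      intro i m hm
      have h1 : ((p:ℝ)^m-1)/((p:ℝ)-1)*U i ≤ ((p:ℝ)^(M+1)-1)/((p:ℝ)-1)*U i := by
        apply mul_le_mul_of_nonneg_right _ (hU0 i)
        apply (div_le_div_iff_of_pos_right hπ1).mpr
        have := pow_le_pow_right₀ hπ.le hm
        linarith
      have h2 : ((p:ℝ)^(M+1)-1)/((p:ℝ)-1)*U i ≤ ((p:ℝ)^(M+1)-1)/((p:ℝ)-1)*H := by
        apply mul_le_mul_of_nonneg_left (hUH i)
        apply div_nonneg _ hπ1.le
        linarith [hpone (M+1)]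
      linarith
    have hDIAG : ∀ (i : Fin g) (m : ℕ), ((p:ℝ)^m-1)/((p:ℝ)-1)*U i < 1 →
        u m i i = ((((p:ℝ)^m-1)/((p:ℝ)-1)*U i - m : ℝ) : EReal) := by
      intro i m hm
      rcases Nat.eq_zero_or_pos m with rfl|hm1
      · rw [hu.1 i]; norm_num
      · exact hu.2.2.1 i m hm1 hm
    -- the function F
    obtain ⟨F, hFle, hFex⟩ : ∃ F : ℝ → ℝ,
        (∀ (t : ℝ) (m : ℕ), m ≤ M+1 → F t ≤ (p:ℝ)^m * t - m) ∧
        (∀ t : ℝ, ∃ m : ℕ, m ≤ M+1 ∧ F t = (p:ℝ)^m * t - m) := by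
      have hF : ∀ K : ℕ, ∃ F : ℝ → ℝ,
          (∀ (t : ℝ) (m : ℕ), m ≤ K → F t ≤ (p:ℝ)^m * t - m) ∧
          (∀ t : ℝ, ∃ m : ℕ, m ≤ K ∧ F t = (p:ℝ)^m * t - m) := by
        intro K
        induction K with
        | zero =>
          refine ⟨fun t => (p:ℝ)^(0:ℕ) * t - ((0:ℕ):ℝ), ?_, ?_⟩
          · intro t m hm
            have : m = 0 := by omega
            subst this
            exact le_rfl
          · intro t
            exact ⟨0, le_rfl, rfl⟩
        | succ K ih =>
          obtain ⟨F0, h1, h2⟩ := ih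
          refine ⟨fun t => min (F0 t) ((p:ℝ)^(K+1) * t - ((K+1:ℕ):ℝ)), ?_, ?_⟩
          · intro t m hm
            rcases Nat.lt_or_ge m (K+1) with h|h
            · exact le_trans (min_le_left _ _) (h1 t m (by omega))
            · have : m = K+1 := by omega
              subst this
              exact min_le_right _ _
          · intro t
            rcases min_cases (F0 t) ((p:ℝ)^(K+1) * t - ((K+1:ℕ):ℝ)) with ⟨he, -⟩|⟨he, -⟩
            · obtain ⟨m, hm, hme⟩ := h2 t
              refine ⟨m, by omega, ?_⟩
              show F0 t ⊓ ((p:ℝ)^(K+1) * t - ((K+1:ℕ):ℝ)) = _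
              rw [he]; exact hme
            · refine ⟨K+1, le_rfl, ?_⟩
              show F0 t ⊓ ((p:ℝ)^(K+1) * t - ((K+1:ℕ):ℝ)) = _
              exact he
      exact hF (M+1)
    -- key fact for exponents beyond M+1
    have hbig : ∀ (n : ℕ) (t : ℝ), M+1 < n → 1/((p:ℝ)^(M+1)*((p:ℝ)-1)) < t →
        (p:ℝ)^(M+1)*t + ((n:ℝ) - ((M:ℝ)+1)) ≤ (p:ℝ)^n * t := by
      intro n t hn ht
      obtain ⟨q, hq, hq1⟩ : ∃ q, n = (M+1)+q ∧ 1 ≤ q := ⟨n-(M+1), by omega, by omega⟩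
      subst hq
      have h2 : (0:ℝ) ≤ (p:ℝ)^q - 1 := by linarith [hpone q]
      have h3 : (p:ℝ)^(M+1)*(((p:ℝ)^q-1)*(1/((p:ℝ)^(M+1)*((p:ℝ)-1)))) = ((p:ℝ)^q-1)/((p:ℝ)-1) := by
        field_simp
      have h4 : (p:ℝ)^(M+1)*(((p:ℝ)^q-1)*(1/((p:ℝ)^(M+1)*((p:ℝ)-1))))
          ≤ (p:ℝ)^(M+1)*(((p:ℝ)^q-1)*t) := by
        apply mul_le_mul_of_nonneg_left _ (hppos (M+1)).le
        apply mul_le_mul_of_nonneg_left ht.le h2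
      have h5 : (q:ℝ) ≤ ((p:ℝ)^q-1)/((p:ℝ)-1) := by
        rw [le_div_iff₀ hπ1]; exact geom_lb_s5 hπ q
      have h6 : (p:ℝ)^(M+1)*((p:ℝ)^q*t) - (p:ℝ)^(M+1)*t = (p:ℝ)^(M+1)*(((p:ℝ)^q-1)*t) := by ring
      have h7 : (p:ℝ)^(M+1)*(p:ℝ)^q*t = (p:ℝ)^(M+1)*((p:ℝ)^q*t) := by ring
      have hcast : ((M+1+q : ℕ):ℝ) = (M:ℝ)+1+(q:ℝ) := by push_cast; ring
      rw [hcast, pow_add (p:ℝ) (M+1) q, h7]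
      linarith [h3, h4, h5, h6]
    -- per-row analysis
    have hrow : ∀ i : Fin g,
        (1/((p:ℝ)^M*((p:ℝ)-1)) - U i/((p:ℝ)-1) ≤ x i) ∨
        (∃ j, j ≠ i ∧
          F (x j) + (if j < i then (1:ℝ) else 0) ≤ F (x i) + ((p:ℝ)^(M+1)-1)/((p:ℝ)-1)*U i ∧
          x j - U i/((p:ℝ)-1) ≤ x i) := by
      intro i
      obtain ⟨n, n', j, j', c, c', hnejj, hc, hc', hn1, hn'1, hcmp, hcmp'⟩ :=
        row_min p U u hu x i (htrop i)
      have hUd : 0 ≤ U i/((p:ℝ)-1) := div_nonneg (hU0 i) hπ1.le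
      -- terminal helper
      have hTerm : ∀ n₀ : ℕ, n₀ ≤ M →
          ((p:ℝ)^n₀*x i + (((p:ℝ)^n₀-1)/((p:ℝ)-1)*U i - (n₀:ℝ)) ≤
            (p:ℝ)^(n₀+1)*x i + (((p:ℝ)^(n₀+1)-1)/((p:ℝ)-1)*U i - ((n₀+1:ℕ):ℝ))) →
          1/((p:ℝ)^M*((p:ℝ)-1)) - U i/((p:ℝ)-1) ≤ x i := by
        intro n₀ hn₀ hineq
        have hid : ((p:ℝ)^(n₀+1)-1)/((p:ℝ)-1) = ((p:ℝ)^n₀-1)/((p:ℝ)-1) + (p:ℝ)^n₀ := by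
          field_simp
          ring
        have hps : (p:ℝ)^(n₀+1) = (p:ℝ)^n₀*(p:ℝ) := pow_succ _ _
        have hcast : ((n₀+1:ℕ):ℝ) = (n₀:ℝ)+1 := by push_cast; ring
        rw [hid, hps, hcast] at hineq
        have key : 1 ≤ (p:ℝ)^n₀*(((p:ℝ)-1)*x i + U i) := by nlinarith [hineq]
        have hA0 : 0 < ((p:ℝ)-1)*x i + U i := by nlinarith [key, hppos n₀]
        have key2 : 1 ≤ (p:ℝ)^M*(((p:ℝ)-1)*x i + U i) := by
          have h9 : (p:ℝ)^n₀*(((p:ℝ)-1)*x i + U i) ≤ (p:ℝ)^M*(((p:ℝ)-1)*x i + U i) :=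
            mul_le_mul_of_nonneg_right (pow_le_pow_right₀ hπ.le hn₀) hA0.le
          linarith
        rw [sub_le_iff_le_add, div_le_iff₀ (by positivity)]
        have hexp : (x i + U i/((p:ℝ)-1))*((p:ℝ)^M*((p:ℝ)-1)) = (p:ℝ)^M*(((p:ℝ)-1)*x i + U i) := by
          field_simp
        linarith [key2, hexp]
      -- off-diagonal case helper
      have hcaseA : ∀ (nn : ℕ) (jj : Fin g) (cc : ℝ), jj ≠ i → u nn i jj = (cc : EReal) →
          (∀ (m : ℕ) (l : Fin g) (d : ℝ), u m i l = (d : EReal) →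
            (p:ℝ)^nn * x jj + cc ≤ (p:ℝ)^m * x l + d) →
          (∃ j0, j0 ≠ i ∧
            F (x j0) + (if j0 < i then (1:ℝ) else 0) ≤ F (x i) + ((p:ℝ)^(M+1)-1)/((p:ℝ)-1)*U i ∧
            x j0 - U i/((p:ℝ)-1) ≤ x i) := by
        intro nn jj cc hji hcu hcm
        have hB : ∀ m : ℕ, m ≤ M+1 →
            (p:ℝ)^nn*x jj + cc ≤ (p:ℝ)^m*x i + (((p:ℝ)^m-1)/((p:ℝ)-1)*U i - (m:ℝ)) :=
          fun m hm => hcm m i _ (hDIAG i m (hEavail i m hm))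
        have hclb : (if jj < i then (1:ℝ) else 0) - (nn:ℝ) ≤ cc := by
          split_ifs with hlt
          · have h1 := hu.2.2.2.2.2 i jj nn hlt
            rw [hcu] at h1
            have := EReal.coe_le_coe_iff.mp h1
            linarith
          · have h1 := hu.2.2.2.2.1 i jj nn
            rw [hcu] at h1
            have := EReal.coe_le_coe_iff.mp h1
            linarith
        have hbon0 : (0:ℝ) ≤ (if jj < i then (1:ℝ) else 0) := by split_ifs <;> norm_num
        have hFxj : F (x jj) + (if jj < i then (1:ℝ) else 0) ≤ (p:ℝ)^nn * x jj + cc := by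
          rcases le_or_gt nn (M+1) with hle|hgt
          · have h1 := hFle (x jj) nn hle
            linarith
          · have h1 := hFle (x jj) (M+1) le_rfl
            have h2 := hbig nn (x jj) hgt (hxr jj)
            have hcast : ((M+1:ℕ):ℝ) = (M:ℝ)+1 := by push_cast; ring
            rw [hcast] at h1
            linarith
        obtain ⟨ms, hms, hmsE⟩ := hFex (x i + U i/((p:ℝ)-1))
        have hBms := hB ms hms
        have hidms : (p:ℝ)^ms*x i + (((p:ℝ)^ms-1)/((p:ℝ)-1)*U i - (ms:ℝ)) =
            ((p:ℝ)^ms*(x i + U i/((p:ℝ)-1)) - (ms:ℝ)) - U i/((p:ℝ)-1) := by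
          ring
        obtain ⟨mt, hmt, hmtE⟩ := hFex (x i)
        have hFY : F (x i + U i/((p:ℝ)-1)) ≤ F (x i) + (p:ℝ)^(M+1)*(U i/((p:ℝ)-1)) := by
          have h1 := hFle (x i + U i/((p:ℝ)-1)) mt hmt
          have h2 : (p:ℝ)^mt*(U i/((p:ℝ)-1)) ≤ (p:ℝ)^(M+1)*(U i/((p:ℝ)-1)) :=
            mul_le_mul_of_nonneg_right (pow_le_pow_right₀ hπ.le hmt) hUd
          have hexp : (p:ℝ)^mt*(x i + U i/((p:ℝ)-1)) =
              (p:ℝ)^mt*x i + (p:ℝ)^mt*(U i/((p:ℝ)-1)) := by ring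
          rw [hmtE]
          linarith
        have hcstid : (p:ℝ)^(M+1)*(U i/((p:ℝ)-1)) - U i/((p:ℝ)-1) =
            ((p:ℝ)^(M+1)-1)/((p:ℝ)-1)*U i := by
          ring
        refine ⟨jj, hji, ?_, ?_⟩
        · have e1 : (p:ℝ)^nn*x jj + cc ≤ F (x i + U i/((p:ℝ)-1)) - U i/((p:ℝ)-1) := by
            rw [hmsE]
            linarith [hBms, hidms]
          linarith [hFxj, e1, hFY, hcstid]
        · rcases le_or_gt nn (M+1) with hle|hgt
          · have hBn := hB nn hle
            have hidn : ((p:ℝ)^nn-1)/((p:ℝ)-1)*U i =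
                (p:ℝ)^nn*(U i/((p:ℝ)-1)) - U i/((p:ℝ)-1) := by ring
            have h3 : (p:ℝ)^nn*(x jj - U i/((p:ℝ)-1)) ≤ (p:ℝ)^nn * x i := by
              have hexp : (p:ℝ)^nn*(x jj - U i/((p:ℝ)-1)) =
                  (p:ℝ)^nn*x jj - (p:ℝ)^nn*(U i/((p:ℝ)-1)) := by ring
              rw [hexp]
              linarith [hBn, hidn, hclb, hbon0, hUd]
            have := (mul_le_mul_iff_of_pos_left (hppos nn)).mp h3
            linarith
          · have hBn := hB (M+1) le_rfl
            have h2 := hbig nn (x jj) hgt (hxr jj)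
            have hidn : ((p:ℝ)^(M+1)-1)/((p:ℝ)-1)*U i =
                (p:ℝ)^(M+1)*(U i/((p:ℝ)-1)) - U i/((p:ℝ)-1) := by ring
            have hcast : ((M+1:ℕ):ℝ) = (M:ℝ)+1 := by push_cast; ring
            rw [hcast] at hBn
            have h3 : (p:ℝ)^(M+1)*(x jj - U i/((p:ℝ)-1)) ≤ (p:ℝ)^(M+1) * x i := by
              have hexp : (p:ℝ)^(M+1)*(x jj - U i/((p:ℝ)-1)) =
                  (p:ℝ)^(M+1)*x jj - (p:ℝ)^(M+1)*(U i/((p:ℝ)-1)) := by ring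
              rw [hexp]
              linarith [hBn, hidn, hclb, hbon0, hUd, h2]
            have := (mul_le_mul_iff_of_pos_left (hppos (M+1))).mp h3
            linarith
      by_cases hJ : j ≠ i
      · exact Or.inr (hcaseA n j c hJ hc hcmp)
      · by_cases hJ' : j' ≠ i
        · exact Or.inr (hcaseA n' j' c' hJ' hc' hcmp')
        · push_neg at hJ hJ'
          rw [hJ] at hc hcmp hnejj
          rw [hJ'] at hc' hcmp' hnejj
          left
          have hcaseB : ∀ (a b : ℕ) (ca cb : ℝ), a < b →
              u a i i = (ca : EReal) → u b i i = (cb : EReal) →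
              (∀ (m : ℕ) (l : Fin g) (d : ℝ), u m i l = (d : EReal) →
                (p:ℝ)^a * x i + ca ≤ (p:ℝ)^m * x l + d) →
              (∀ (m : ℕ) (l : Fin g) (d : ℝ), u m i l = (d : EReal) →
                (p:ℝ)^b * x i + cb ≤ (p:ℝ)^m * x l + d) →
              1/((p:ℝ)^M*((p:ℝ)-1)) - U i/((p:ℝ)-1) ≤ x i := by
            intro a b ca cb hab hca hcb hcma hcmb
            have hBa : ∀ m : ℕ, ((p:ℝ)^m-1)/((p:ℝ)-1)*U i < 1 →
                (p:ℝ)^a*x i + ca ≤ (p:ℝ)^m*x i + (((p:ℝ)^m-1)/((p:ℝ)-1)*U i - (m:ℝ)) :=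
              fun m hm => hcma m i _ (hDIAG i m hm)
            have hBb : ∀ m : ℕ, ((p:ℝ)^m-1)/((p:ℝ)-1)*U i < 1 →
                (p:ℝ)^b*x i + cb ≤ (p:ℝ)^m*x i + (((p:ℝ)^m-1)/((p:ℝ)-1)*U i - (m:ℝ)) :=
              fun m hm => hcmb m i _ (hDIAG i m hm)
            rcases lt_or_ge (((p:ℝ)^b-1)/((p:ℝ)-1)*U i) 1 with hlt|hge
            · have hcbE : cb = ((p:ℝ)^b-1)/((p:ℝ)-1)*U i - (b:ℝ) := by
                have h1 := hDIAG i b hlt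
                rw [hcb] at h1
                exact EReal.coe_eq_coe_iff.mp h1
              rcases lt_trichotomy b (M+1) with hbM|hbM|hbM
              · apply hTerm b (by omega)
                have h1 := hBb (b+1) (hEavail i (b+1) (by omega))
                rw [hcbE] at h1
                exact h1
              · subst hbM
                rcases Nat.eq_zero_or_pos a with ha0|ha1
                · subst ha0
                  have hca0 : ca = 0 := by
                    have h1 := hu.1 i
                    rw [hca] at h1
                    exact EReal.coe_eq_coe_iff.mp (h1.trans EReal.coe_zero.symm)
                  have h1 := hBa (M+1) (hEavail i (M+1) le_rfl)
                  have h2 := hBb 0 (hEavail i 0 (by omega))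
                  rw [hca0] at h1
                  rw [hcbE] at h2
                  have heq : (p:ℝ)^(M+1)*x i + (((p:ℝ)^(M+1)-1)/((p:ℝ)-1)*U i - ((M+1:ℕ):ℝ)) = x i :=
                    le_antisymm (by simp only [pow_zero, one_mul] at h2; norm_num at h2; push_cast at h2 ⊢; linarith [h2])
                      (by simp only [pow_zero, one_mul] at h1; push_cast at h1 ⊢; linarith [h1])
                  have hgub := geom_ub_s5 hπ M
                  have hcast : ((M+1:ℕ):ℝ) = (M:ℝ)+1 := by push_cast; ring
                  rw [hcast] at heq
                  have hpos1 : (0:ℝ) < (p:ℝ)^(M+1)-1 := by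
                    have : (1:ℝ) < (p:ℝ)^(M+1) := one_lt_pow₀ hπ (by omega)
                    linarith
                  have hexp2 : ((p:ℝ)^(M+1)-1)*(x i + U i/((p:ℝ)-1)) =
                      ((p:ℝ)^(M+1)-1)*x i + ((p:ℝ)^(M+1)-1)*(U i/((p:ℝ)-1)) := by ring
                  have hid : ((p:ℝ)^(M+1)-1)/((p:ℝ)-1)*U i = ((p:ℝ)^(M+1)-1)*(U i/((p:ℝ)-1)) := by
                    ring
                  have hkey : ((p:ℝ)^(M+1)-1)*(x i + U i/((p:ℝ)-1)) = (M:ℝ)+1 := by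
                    linarith [heq, hexp2, hid]
                  have hAeq : x i + U i/((p:ℝ)-1) = ((M:ℝ)+1)/((p:ℝ)^(M+1)-1) := by
                    rw [eq_div_iff (ne_of_gt hpos1)]
                    linarith [hkey]
                  rw [sub_le_iff_le_add, hAeq, div_le_div_iff₀ (by positivity) hpos1]
                  linarith [hgub]
                · have hltA : ((p:ℝ)^a-1)/((p:ℝ)-1)*U i < 1 := hEavail i a (by omega)
                  have hcaE : ca = ((p:ℝ)^a-1)/((p:ℝ)-1)*U i - (a:ℝ) := by
                    have h1 := hDIAG i a hltA
                    rw [hca] at h1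
                    exact EReal.coe_eq_coe_iff.mp h1
                  apply hTerm a (by omega)
                  have h1 := hBa (a+1) (hEavail i (a+1) (by omega))
                  rw [hcaE] at h1
                  exact h1
              · exfalso
                obtain ⟨m₀, rfl⟩ : ∃ m₀, b = m₀+1 := ⟨b-1, by omega⟩
                have hm₀ : M+1 ≤ m₀ := by omega
                have hmon : ((p:ℝ)^m₀-1)/((p:ℝ)-1)*U i ≤ ((p:ℝ)^(m₀+1)-1)/((p:ℝ)-1)*U i := by
                  apply mul_le_mul_of_nonneg_right _ (hU0 i)
                  have hple := pow_le_pow_right₀ (a := (p:ℝ)) hπ.le (show m₀ ≤ m₀+1 by omega)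
                  exact (div_le_div_iff_of_pos_right hπ1).mpr (by linarith)
                have hltm₀ : ((p:ℝ)^m₀-1)/((p:ℝ)-1)*U i < 1 := lt_of_le_of_lt hmon hlt
                have h1 := hBb m₀ hltm₀
                rw [hcbE] at h1
                have hid : ((p:ℝ)^(m₀+1)-1)/((p:ℝ)-1)*U i =
                    ((p:ℝ)^m₀-1)/((p:ℝ)-1)*U i + (p:ℝ)^m₀*U i := by field_simp; ring
                have hps : (p:ℝ)^(m₀+1) = (p:ℝ)^m₀*(p:ℝ) := pow_succ _ _
                have hcast : ((m₀+1:ℕ):ℝ) = (m₀:ℝ)+1 := by push_cast; ring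
                rw [hid, hps, hcast] at h1
                have hU0' : 0 ≤ (p:ℝ)^m₀*U i := mul_nonneg (hppos m₀).le (hU0 i)
                have hkey : (p:ℝ)^m₀*(((p:ℝ)-1)*x i) ≤ 1 := by nlinarith [h1, hU0']
                have h5 : (p:ℝ)^(M+1)*(((p:ℝ)-1)*(1/((p:ℝ)^(M+1)*((p:ℝ)-1)))) = 1 := by
                  field_simp
                have h6 : (p:ℝ)^(M+1) ≤ (p:ℝ)^m₀ := pow_le_pow_right₀ hπ.le hm₀
                have h7 : ((p:ℝ)-1)*(1/((p:ℝ)^(M+1)*((p:ℝ)-1))) < ((p:ℝ)-1)*x i :=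
                  mul_lt_mul_of_pos_left (hxr i) hπ1
                have h8 : 0 < ((p:ℝ)-1)*(1/((p:ℝ)^(M+1)*((p:ℝ)-1))) := by positivity
                have h9 := mul_le_mul_of_nonneg_right h6 h8.le
                have h10 := mul_lt_mul_of_pos_left h7 (hppos m₀)
                linarith [h5, h9, h10, hkey]
            · exfalso
              have hbM : M+1 < b := by
                by_contra hh
                push_neg at hh
                exact absurd (hEavail i b hh) (not_lt.mpr hge)
              have hcblb : 1-(b:ℝ) ≤ cb := by
                have h1 := hu.2.2.2.1 i b hge
                rw [hcb] at h1
                exact EReal.coe_le_coe_iff.mp h1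
              have h1 := hBb (M+1) (hEavail i (M+1) le_rfl)
              have h2 := hbig b (x i) hbM (hxr i)
              have hEM1 := hEavail i (M+1) le_rfl
              have hcast : ((M+1:ℕ):ℝ) = (M:ℝ)+1 := by push_cast; ring
              rw [hcast] at h1
              linarith [h1, h2, hcblb, hEM1]
          have hnn' : n ≠ n' := by
            intro h
            apply hnejj
            rw [h]
          rcases lt_or_gt_of_ne hnn' with h|h
          · exact hcaseB n n' c c' h hc hc' hcmp hcmp'
          · exact hcaseB n' n c' c h hc' hc hcmp' hcmp
    have hrow' : ∀ i : Fin g, ∃ jj : Fin g,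
        ((1/((p:ℝ)^M*((p:ℝ)-1)) - U i/((p:ℝ)-1) ≤ x i) ∧ jj = i) ∨
        (jj ≠ i ∧
          F (x jj) + (if jj < i then (1:ℝ) else 0) ≤ F (x i) + ((p:ℝ)^(M+1)-1)/((p:ℝ)-1)*U i ∧
          x jj - U i/((p:ℝ)-1) ≤ x i) := by
      intro i
      rcases hrow i with h|⟨jj, h1, h2, h3⟩
      · exact ⟨i, Or.inl ⟨h, rfl⟩⟩
      · exact ⟨jj, Or.inr ⟨h1, h2, h3⟩⟩
    choose e he using hrow'
    have he' : ∀ l : Fin g, ¬(1/((p:ℝ)^M*((p:ℝ)-1)) - U l/((p:ℝ)-1) ≤ x l) →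
        (e l ≠ l ∧
          F (x (e l)) + (if e l < l then (1:ℝ) else 0) ≤ F (x l) + ((p:ℝ)^(M+1)-1)/((p:ℝ)-1)*U l ∧
          x (e l) - U l/((p:ℝ)-1) ≤ x l) := by
      intro l hnl
      rcases he l with ⟨hg1, -⟩|h
      · exact absurd hg1 hnl
      · exact h
    have hnocyc : ∀ (k : Fin g) (a b : ℕ), a < b →
        (∀ s : ℕ, ¬(1/((p:ℝ)^M*((p:ℝ)-1)) - U (e^[s] k)/((p:ℝ)-1) ≤ x (e^[s] k))) →
        e^[a] k ≠ e^[b] k := by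
      intro k a b hab hno heq
      set P : Finset (Fin g) := (Finset.Ico a b).image (fun s => e^[s] k) with hP
      have hPne : P.Nonempty :=
        ⟨e^[a] k, Finset.mem_image_of_mem _ (Finset.mem_Ico.mpr ⟨le_rfl, hab⟩)⟩
      have hmemP : ∀ l ∈ P, ∃ s : ℕ, l = e^[s] k := by
        intro l hl
        rw [hP, Finset.mem_image] at hl
        obtain ⟨s, -, hs⟩ := hl
        exact ⟨s, hs.symm⟩
      have hePmem : ∀ l ∈ P, e l ∈ P := by
        intro l hl
        rw [hP, Finset.mem_image] at hl
        obtain ⟨s, hs, rfl⟩ := hl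
        have hsb := Finset.mem_Ico.mp hs
        have hes : e (e^[s] k) = e^[s+1] k := (Function.iterate_succ_apply' e s k).symm
        rw [hP, Finset.mem_image]
        rcases eq_or_lt_of_le (show s+1 ≤ b by omega) with hsb1|hsb1
        · refine ⟨a, Finset.mem_Ico.mpr ⟨le_rfl, hab⟩, ?_⟩
          show e^[a] k = e (e^[s] k)
          rw [hes, hsb1]
          exact heq
        · refine ⟨s+1, Finset.mem_Ico.mpr ⟨by omega, hsb1⟩, ?_⟩
          show e^[s+1] k = e (e^[s] k)
          exact hes.symm
      have himg : P.image e = P := by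
        apply Finset.Subset.antisymm
        · intro l' hl'
          rw [Finset.mem_image] at hl'
          obtain ⟨l, hl, rfl⟩ := hl'
          exact hePmem l hl
        · intro l hl
          rw [hP, Finset.mem_image] at hl
          obtain ⟨s, hs, rfl⟩ := hl
          have hsab := Finset.mem_Ico.mp hs
          rw [Finset.mem_image]
          rcases eq_or_lt_of_le hsab.1 with hsa|hsa
          · refine ⟨e^[b-1] k, ?_, ?_⟩
            · rw [hP]
              exact Finset.mem_image_of_mem _ (Finset.mem_Ico.mpr ⟨by omega, by omega⟩)
            · have h9 : e (e^[b-1] k) = e^[b-1+1] k := (Function.iterate_succ_apply' e (b-1) k).symm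
              rw [h9, show b-1+1 = b by omega, ← heq, ← hsa]
          · refine ⟨e^[s-1] k, ?_, ?_⟩
            · rw [hP]
              exact Finset.mem_image_of_mem _ (Finset.mem_Ico.mpr ⟨by omega, by omega⟩)
            · have h9 : e (e^[s-1] k) = e^[s-1+1] k := (Function.iterate_succ_apply' e (s-1) k).symm
              rw [h9, show s-1+1 = s by omega]
      have hinjP : Set.InjOn e ↑P := Finset.card_image_iff.mp (by rw [himg])
      have hsumF : ∑ l ∈ P, F (x (e l)) = ∑ l ∈ P, F (x l) := by
        have h1 : ∑ l ∈ P.image e, F (x l) = ∑ l ∈ P, F (x (e l)) :=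
          Finset.sum_image (fun a1 ha b1 hb hab2 => hinjP ha hb hab2)
        rw [himg] at h1
        exact h1.symm
      have hedge : ∀ l ∈ P, e l ≠ l ∧
          F (x (e l)) + (if e l < l then (1:ℝ) else 0) ≤ F (x l) + ((p:ℝ)^(M+1)-1)/((p:ℝ)-1)*U l ∧
          x (e l) - U l/((p:ℝ)-1) ≤ x l := by
        intro l hl
        obtain ⟨s, rfl⟩ := hmemP l hl
        exact he' _ (hno s)
      have hsum2 : ∑ l ∈ P, (F (x (e l)) + (if e l < l then (1:ℝ) else 0)) ≤
          ∑ l ∈ P, (F (x l) + ((p:ℝ)^(M+1)-1)/((p:ℝ)-1)*U l) :=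
        Finset.sum_le_sum (fun l hl => (hedge l hl).2.1)
      rw [Finset.sum_add_distrib, Finset.sum_add_distrib, hsumF] at hsum2
      have hcsum : ∑ l ∈ P, ((p:ℝ)^(M+1)-1)/((p:ℝ)-1)*U l < 1 := by
        have h1 : ∑ l ∈ P, ((p:ℝ)^(M+1)-1)/((p:ℝ)-1)*U l =
            ((p:ℝ)^(M+1)-1)/((p:ℝ)-1) * ∑ l ∈ P, U l := by rw [Finset.mul_sum]
        have h2 : ∑ l ∈ P, U l ≤ H := by
          rw [← hUsum]
          exact Finset.sum_le_sum_of_subset_of_nonneg (Finset.subset_univ P) (fun i _ _ => hU0 i)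
        have h3 : (0:ℝ) ≤ ((p:ℝ)^(M+1)-1)/((p:ℝ)-1) := by
          apply div_nonneg _ hπ1.le
          linarith [hpone (M+1)]
        have h4 : ((p:ℝ)^(M+1)-1)/((p:ℝ)-1) * ∑ l ∈ P, U l ≤ ((p:ℝ)^(M+1)-1)/((p:ℝ)-1)*H :=
          mul_le_mul_of_nonneg_left h2 h3
        linarith [hcstH]
      have hbig1 : (1:ℝ) ≤ ∑ l ∈ P, (if e l < l then (1:ℝ) else 0) := by
        have hl₀P : P.max' hPne ∈ P := P.max'_mem hPne
        have hel₀ : e (P.max' hPne) ∈ P := hePmem _ hl₀P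
        have hlt : e (P.max' hPne) < P.max' hPne :=
          lt_of_le_of_ne (P.le_max' _ hel₀) ((hedge _ hl₀P).1)
        have h1 : (if e (P.max' hPne) < P.max' hPne then (1:ℝ) else 0) = 1 := if_pos hlt
        have h2 := Finset.single_le_sum (f := fun l => (if e l < l then (1:ℝ) else 0))
          (fun l _ => by split_ifs <;> norm_num) hl₀P
        rw [h1] at h2
        exact h2
      linarith
    have hstop : ∀ k : Fin g, ∃ s : ℕ,
        1/((p:ℝ)^M*((p:ℝ)-1)) - U (e^[s] k)/((p:ℝ)-1) ≤ x (e^[s] k) := by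
      intro k
      by_contra hno
      push_neg at hno
      have hno' : ∀ s : ℕ, ¬(1/((p:ℝ)^M*((p:ℝ)-1)) - U (e^[s] k)/((p:ℝ)-1) ≤ x (e^[s] k)) :=
        fun s => not_le.mpr (hno s)
      have hpig : ∃ a ∈ Finset.range (g+1), ∃ b ∈ Finset.range (g+1),
          a ≠ b ∧ e^[a] k = e^[b] k := by
        apply Finset.exists_ne_map_eq_of_card_lt_of_maps_to (t := (Finset.univ : Finset (Fin g)))
        · simpa using Nat.lt_succ_self g
        · intro a _
          exact Finset.mem_univ _
      obtain ⟨a, -, b, -, hab, heqab⟩ := hpig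
      rcases hab.lt_or_gt with h|h
      · exact hnocyc k a b h hno' heqab
      · exact hnocyc k b a h hno' heqab.symm
    intro k
    obtain ⟨s₀, hs₀, hs₀min⟩ : ∃ s₀ : ℕ,
        (1/((p:ℝ)^M*((p:ℝ)-1)) - U (e^[s₀] k)/((p:ℝ)-1) ≤ x (e^[s₀] k)) ∧
        ∀ t, t < s₀ → ¬(1/((p:ℝ)^M*((p:ℝ)-1)) - U (e^[t] k)/((p:ℝ)-1) ≤ x (e^[t] k)) :=
      ⟨Nat.find (hstop k), Nat.find_spec (hstop k), fun t ht => Nat.find_min (hstop k) ht⟩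
    have hinj : ∀ a b : ℕ, a ≤ s₀ → b ≤ s₀ → e^[a] k = e^[b] k → a = b := by
      have key : ∀ a b : ℕ, a < b → b ≤ s₀ → e^[a] k = e^[b] k → False := by
        intro a b hab hbs heq
        have hper : ∀ t : ℕ, a ≤ t → e^[t + (b-a)] k = e^[t] k := by
          intro t ht
          have h1 : t + (b-a) = (t-a) + b := by omega
          have h2 : (t-a) + a = t := by omega
          rw [h1, Function.iterate_add_apply, ← heq, ← Function.iterate_add_apply, h2]
        have h3 := hper (s₀ - (b-a)) (by omega)
        rw [show s₀-(b-a)+(b-a) = s₀ by omega] at h3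
        apply hs₀min (s₀ - (b-a)) (by omega)
        rw [← h3]
        exact hs₀
      intro a b ha hb heq
      rcases lt_trichotomy a b with h|h|h
      · exact (key a b h hb heq).elim
      · exact h
      · exact (key b a h ha heq.symm).elim
    have main : ∀ d t : ℕ, t + d = s₀ →
        1/((p:ℝ)^M*((p:ℝ)-1)) -
          (∑ l ∈ (Finset.Icc t s₀).image (fun s => e^[s] k), U l)/((p:ℝ)-1) ≤ x (e^[t] k) := by
      intro d
      induction d with
      | zero =>
        intro t ht
        have ht0 : t = s₀ := by omega
        subst ht0
        rw [Finset.Icc_self, Finset.image_singleton, Finset.sum_singleton]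
        exact hs₀
      | succ d ih =>
        intro t ht
        have hts : t < s₀ := by omega
        obtain ⟨hne1, -, htail⟩ := he' _ (hs₀min t hts)
        have hit : e (e^[t] k) = e^[t+1] k := (Function.iterate_succ_apply' e t k).symm
        rw [hit] at htail
        have hI : Finset.Icc t s₀ = insert t (Finset.Icc (t+1) s₀) := by
          ext z
          simp only [Finset.mem_Icc, Finset.mem_insert]
          omega
        have hnotmem : e^[t] k ∉ (Finset.Icc (t+1) s₀).image (fun s => e^[s] k) := by
          rw [Finset.mem_image]
          rintro ⟨s, hsmem, hs⟩
          have hs2 := Finset.mem_Icc.mp hsmem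
          have := hinj s t (by omega) (by omega) hs
          omega
        have hsum : ∑ l ∈ (Finset.Icc t s₀).image (fun s => e^[s] k), U l
            = U (e^[t] k) + ∑ l ∈ (Finset.Icc (t+1) s₀).image (fun s => e^[s] k), U l := by
          rw [hI, Finset.image_insert, Finset.sum_insert hnotmem]
        have ih1 := ih (t+1) (by omega)
        rw [hsum, add_div]
        linarith [ih1, htail]
    have hfin := main s₀ 0 (by omega)
    rw [Function.iterate_zero_apply] at hfin
    have hsub : ∑ l ∈ (Finset.Icc 0 s₀).image (fun s => e^[s] k), U l ≤ H := by
      rw [← hUsum]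
      exact Finset.sum_le_sum_of_subset_of_nonneg (Finset.subset_univ _) (fun i _ _ => hU0 i)
    have hdd : (∑ l ∈ (Finset.Icc 0 s₀).image (fun s => e^[s] k), U l)/((p:ℝ)-1) ≤ H/((p:ℝ)-1) :=
      (div_le_div_iff_of_pos_right hπ1).mpr hsub
    linarith



  · -- part (b)
    rintro ⟨x, hx1, htrop⟩
    have hrowb : ∀ i : Fin g, ∃ j, x j < x i := by
      intro i
      obtain ⟨n, n', j, j', c, c', hnejj, hc, hc', hn1, hn'1, hcmp, hcmp'⟩ :=
        row_min p U u hu x i (htrop i)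
      have key : ∀ (nn : ℕ) (jj : Fin g) (cc : ℝ), 1 ≤ nn → u nn i jj = (cc : EReal) →
          (∀ (m : ℕ) (l : Fin g) (d : ℝ), u m i l = (d : EReal) →
            (p:ℝ)^nn * x jj + cc ≤ (p:ℝ)^m * x l + d) → ∃ j', x j' < x i := by
        intro nn jj cc hnn hcu hcm
        have hvx : (p:ℝ)^nn * x jj + cc ≤ x i := by
          have := hcm 0 i 0 (hu00 i)
          simpa using this
        have hpn1 : (0:ℝ) < (p:ℝ)^nn - 1 := by
          have : (1:ℝ) < (p:ℝ)^nn := one_lt_pow₀ hπ (by omega)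
          linarith
        have hglb : (nn:ℝ) ≤ ((p:ℝ)^nn - 1)/((p:ℝ)-1) := by
          rw [le_div_iff₀ hπ1]; exact geom_lb_s5 hπ nn
        by_cases hji : jj = i
        · exfalso
          subst hji
          have hclb : -(nn:ℝ) ≤ cc := by
            rcases lt_or_ge (((p:ℝ)^nn - 1)/((p:ℝ)-1) * U jj) 1 with hlt|hge
            · have h1 := hu.2.2.1 jj nn hnn hlt
              rw [hcu] at h1
              have h2 := EReal.coe_eq_coe_iff.mp h1
              have h3 : 0 ≤ ((p:ℝ)^nn - 1)/((p:ℝ)-1) * U jj :=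
                mul_nonneg (div_nonneg (by linarith) hπ1.le) (hU0 jj)
              linarith
            · have h1 := hu.2.2.2.1 jj nn hge
              rw [hcu] at h1
              have h2 := EReal.coe_le_coe_iff.mp h1
              linarith
          -- (p^nn - 1) x_jj ≤ nn but x_jj > 1/(p-1)
          have h4 : ((p:ℝ)^nn - 1) * x jj ≤ (nn:ℝ) := by linarith
          have h5 : ((p:ℝ)^nn - 1) * (1/((p:ℝ)-1)) < ((p:ℝ)^nn - 1) * x jj :=
            mul_lt_mul_of_pos_left (hx1 jj) hpn1
          have h6 : ((p:ℝ)^nn - 1) * (1/((p:ℝ)-1)) = ((p:ℝ)^nn - 1)/((p:ℝ)-1) := by ring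
          linarith
        · refine ⟨jj, ?_⟩
          have hclb : -(nn:ℝ) ≤ cc := by
            have h1 := hu.2.2.2.2.1 i jj nn
            rw [hcu] at h1
            exact EReal.coe_le_coe_iff.mp h1
          have h5 : ((p:ℝ)^nn - 1) * (1/((p:ℝ)-1)) < ((p:ℝ)^nn - 1) * x jj :=
            mul_lt_mul_of_pos_left (hx1 jj) hpn1
          have h6 : ((p:ℝ)^nn - 1) * (1/((p:ℝ)-1)) = ((p:ℝ)^nn - 1)/((p:ℝ)-1) := by ring
          -- x jj < p^nn x jj - nn ≤ x i
          nlinarith [hvx, hclb, h5, h6, hglb]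
      by_cases hn : 1 ≤ n
      · exact key n j c hn hc hcmp
      · have hn0 : n = 0 := by omega
        have hji : j = i := by
          by_contra hji
          exact absurd (hn1 hji) hn
        by_cases hn' : 1 ≤ n'
        · exact key n' j' c' hn' hc' hcmp'
        · exfalso
          have hn'0 : n' = 0 := by omega
          have hji' : j' = i := by
            by_contra hji'
            exact absurd (hn'1 hji') hn'
          apply hnejj
          rw [hn0, hn'0, hji, hji']
    have : Nonempty (Fin g) := ⟨⟨0, by omega⟩⟩
    obtain ⟨k, -, hk⟩ := Finset.exists_min_image Finset.univ x ⟨Classical.arbitrary _, Finset.mem_univ _⟩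
    obtain ⟨j, hj⟩ := hrowb k
    exact absurd hj (not_lt.mpr (hk j (Finset.mem_univ j)))
end
end

section
/- Let b_{n,i,j} ∈ K for integers n ≥ 0 and 1 ≤ i,j ≤ g be such that the data u_{n,i,j} := ord(b_{n,i,j}) (with the given N, H, U_i) satisfy Hypotheses (H). For 1 ≤ n ≤ N set r_n = 1/(p^n(p−1)) and r_n' = 1/(p^{n−1}(p−1)) − H/(p−1). Let ξ = (ξ_1,…,ξ_g) ∈ K^g be a common zero of the g series, i.e. for each i = 1,…,g the series Σ_{j=1}^g Σ_{m=0}^∞ b_{m,i,j}·ξ_j^{p^m} converges in K and its sum is 0 (the series converges automatically whenever ord(ξ_k) > 0 for all k, since ord(b_{m,i,j}) ≥ −m). Then: (1) for each 1 ≤ n ≤ N, if ord(ξ_k) > r_n for all k then ord(ξ_k) ≥ r_n' for all k; (2) if ord(ξ_k) > 1/(p−1) for all k then ξ = 0. -/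
open scoped BigOperators Classical

noncomputable section

/-- The valuation `ord x = −log_p ‖x‖ ∈ ℝ ∪ {+∞}`, with `ord 0 = +∞`. -/
def ordOf (p : ℕ) {K : Type*} [NontriviallyNormedField K] (x : K) : EReal :=
  if x = 0 then ⊤ else ((-Real.logb p ‖x‖ : ℝ) : EReal)

/-! ### Auxiliary lemmas -/

section ordlemmas
variable {p : ℕ} {K : Type*} [NontriviallyNormedField K] (hP1 : 1 < (p:ℝ))
include hP1

lemma le_ordOf_iff (c : ℝ) (x : K) :
    ((c : ℝ) : EReal) ≤ ordOf p x ↔ ‖x‖ ≤ (p : ℝ) ^ (-c) := by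
  unfold ordOf
  split_ifs with h
  · simp only [le_top, true_iff, h, norm_zero]
    positivity
  · rw [EReal.coe_le_coe_iff, le_neg, Real.logb_le_iff_le_rpow hP1 (norm_pos_iff.mpr h)]

lemma lt_ordOf_iff (c : ℝ) (x : K) :
    ((c : ℝ) : EReal) < ordOf p x ↔ ‖x‖ < (p : ℝ) ^ (-c) := by
  unfold ordOf
  split_ifs with h
  · simp only [h, norm_zero, EReal.coe_lt_top, true_iff]
    positivity
  · rw [EReal.coe_lt_coe_iff, lt_neg, Real.logb_lt_iff_lt_rpow hP1 (norm_pos_iff.mpr h)]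

lemma ordOf_eq_norm (c : ℝ) (x : K) (h : ordOf p x = ((c : ℝ) : EReal)) :
    ‖x‖ = (p : ℝ) ^ (-c) := by
  unfold ordOf at h
  split_ifs at h with h0
  · exact absurd h.symm (EReal.coe_ne_top c)
  · have h1 : -Real.logb p ‖x‖ = c := by exact_mod_cast h
    have hx : (0:ℝ) < ‖x‖ := norm_pos_iff.mpr h0
    rw [← Real.rpow_logb (by linarith : (0:ℝ) < (p:ℝ)) (by linarith) hx]
    rw [show Real.logb p ‖x‖ = -c by linarith]

omit hP1 in
lemma ordOf_top_eq_zero (x : K) (h : ordOf p x = ⊤) : x = 0 := by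
  unfold ordOf at h
  split_ifs at h with h0
  · exact h0
  · exact absurd h (EReal.coe_ne_top _)

end ordlemmas

lemma my_pow_sub_pow_le {P : ℝ} (hP : 1 ≤ P) (m n : ℕ) (h : m ≤ n) :
    P ^ n - P ^ m ≤ ((n : ℝ) - m) * (P ^ (n - 1) * (P - 1)) := by
  induction n with
  | zero => interval_cases m; simp
  | succ n ih =>
    rcases Nat.lt_or_ge m (n+1) with hm | hm
    · have hm' : m ≤ n := Nat.lt_succ_iff.mp hm
      have h1 := ih hm'
      have h2 : P ^ (n - 1) ≤ P ^ n := pow_le_pow_right₀ hP (Nat.sub_le n 1)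
      have h3 : (0:ℝ) ≤ (n : ℝ) - m := by
        have := (Nat.cast_le (α := ℝ)).mpr hm'; linarith
      have h4 : P ^ (n+1) - P ^ n = P ^ n * (P - 1) := by ring
      have h5 : ((n:ℝ) - m) * (P ^ (n-1) * (P-1)) ≤ ((n:ℝ) - m) * (P ^ n * (P-1)) := by
        apply mul_le_mul_of_nonneg_left _ h3
        apply mul_le_mul_of_nonneg_right h2 (by linarith)
      have hsucc : (n + 1 : ℕ) - 1 = n := rfl
      rw [hsucc]
      push_cast
      nlinarith [pow_nonneg (by linarith : (0:ℝ) ≤ P) n]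
    · have : m = n + 1 := le_antisymm h hm
      subst this; simp

lemma my_pow_sub_pow_ge {P : ℝ} (hP : 1 ≤ P) (n m : ℕ) (h : n ≤ m) :
    ((m : ℝ) - n) * (P ^ n * (P - 1)) ≤ P ^ m - P ^ n := by
  induction m with
  | zero => interval_cases n; simp
  | succ m ih =>
    rcases Nat.lt_or_ge n (m+1) with hm | hm
    · have hm' : n ≤ m := Nat.lt_succ_iff.mp hm
      have h1 := ih hm'
      have h2 : P ^ n ≤ P ^ m := pow_le_pow_right₀ hP hm'
      have h3 : P ^ (m+1) = P ^ m * P := pow_succ P m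
      have h4 : P ^ n * (P - 1) ≤ P ^ m * (P - 1) :=
        mul_le_mul_of_nonneg_right h2 (by linarith)
      push_cast
      nlinarith [pow_nonneg (by linarith : (0:ℝ) ≤ P) n]
    · have : n = m + 1 := le_antisymm h hm
      subst this; simp

lemma my_rpow_pow {P : ℝ} (hP0 : 0 < P) (c : ℝ) (e : ℕ) :
    (P ^ c) ^ e = P ^ (c * e) := by
  rw [← Real.rpow_natCast (P ^ c) e, ← Real.rpow_mul hP0.le]

lemma combo₁ {P a c G y x : ℝ} (hP1 : 1 < P)
    (hy : y ≤ P ^ a) (hx0 : 0 ≤ x) (hxc : x ≤ P ^ c) (e : ℕ)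
    (hexp : a + c * e < G) : y * x ^ e < P ^ G := by
  have hP0 : (0:ℝ) < P := by linarith
  calc y * x ^ e ≤ P ^ a * (P ^ c) ^ e := by
        apply mul_le_mul hy (pow_le_pow_left₀ hx0 hxc e) (by positivity) (by positivity)
    _ = P ^ (a + c * e) := by rw [my_rpow_pow hP0, ← Real.rpow_add hP0]
    _ < P ^ G := Real.rpow_lt_rpow_left_iff hP1 |>.mpr hexp

lemma combo₂ {P a c G y x : ℝ} (hP1 : 1 < P)
    (hy : y ≤ P ^ a) (hy0 : 0 ≤ y) (hx0 : 0 < x) (hxc : x < P ^ c) (e : ℕ) (he : e ≠ 0)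
    (hexp : a + c * e ≤ G) : y * x ^ e < P ^ G := by
  have hP0 : (0:ℝ) < P := by linarith
  rcases eq_or_lt_of_le hy0 with h | h
  · rw [← h, zero_mul]; positivity
  · calc y * x ^ e < y * (P ^ c) ^ e := by
          apply mul_lt_mul_of_pos_left (pow_lt_pow_left₀ hxc hx0.le he) h
      _ ≤ P ^ a * (P ^ c) ^ e := mul_le_mul_of_nonneg_right hy (by positivity)
      _ = P ^ (a + c * e) := by rw [my_rpow_pow hP0, ← Real.rpow_add hP0]
      _ ≤ P ^ G := Real.rpow_le_rpow_left_iff hP1 |>.mpr hexp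

lemma combo₃ {P a c₁ c₂ G y x : ℝ} (hP1 : 1 < P)
    (hy : y ≤ P ^ a) (hy0 : 0 ≤ y) (hx0 : 0 < x) (h1 : x ≤ P ^ c₁) (h2 : x < P ^ c₂)
    (e₁ e₂ : ℕ) (he : e₂ ≠ 0)
    (hexp : a + (c₁ * e₁ + c₂ * e₂) ≤ G) : y * x ^ (e₁ + e₂) < P ^ G := by
  have hP0 : (0:ℝ) < P := by linarith
  rcases eq_or_lt_of_le hy0 with h | h
  · rw [← h, zero_mul]; positivity
  · have hx1 : x ^ e₁ ≤ (P ^ c₁) ^ e₁ := pow_le_pow_left₀ hx0.le h1 e₁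
    have hx2 : x ^ e₂ < (P ^ c₂) ^ e₂ := pow_lt_pow_left₀ h2 hx0.le he
    calc y * x ^ (e₁ + e₂) = y * (x ^ e₁ * x ^ e₂) := by rw [pow_add]
      _ < y * ((P ^ c₁) ^ e₁ * (P ^ c₂) ^ e₂) := by
          apply mul_lt_mul_of_pos_left _ h
          calc x ^ e₁ * x ^ e₂ < x ^ e₁ * (P ^ c₂) ^ e₂ := by
                apply mul_lt_mul_of_pos_left hx2 (by positivity)
            _ ≤ (P ^ c₁) ^ e₁ * (P ^ c₂) ^ e₂ := mul_le_mul_of_nonneg_right hx1 (by positivity)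
      _ ≤ P ^ a * ((P ^ c₁) ^ e₁ * (P ^ c₂) ^ e₂) := mul_le_mul_of_nonneg_right hy (by positivity)
      _ = P ^ (a + (c₁ * e₁ + c₂ * e₂)) := by
          rw [my_rpow_pow hP0, my_rpow_pow hP0, ← Real.rpow_add hP0, ← Real.rpow_add hP0]
      _ ≤ P ^ G := Real.rpow_le_rpow_left_iff hP1 |>.mpr hexp

lemma hasSum_zero_contra {g : ℕ} {K : Type*} [NontriviallyNormedField K] [CompleteSpace K]
    [IsUltrametricDist K]
    {f : ℕ × Fin g → K} (hf : HasSum f 0) (q₀ : ℕ × Fin g)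
    (hM : 0 < ‖f q₀‖) (hlt : ∀ q, q ≠ q₀ → ‖f q‖ < ‖f q₀‖) : False := by
  set M := ‖f q₀‖ with hMdef
  have hsum : Summable f := hf.summable
  have htend : Filter.Tendsto f Filter.cofinite (nhds 0) := hsum.tendsto_cofinite_zero
  have hev : ∀ᶠ q in Filter.cofinite, ‖f q‖ < M / 2 := by
    have : Metric.ball (0:K) (M/2) ∈ nhds (0:K) := Metric.ball_mem_nhds 0 (by linarith)
    filter_upwards [htend this] with q hq
    simpa [dist_eq_norm] using hq
  obtain ⟨s, hs⟩ : ∃ s : Finset (ℕ × Fin g), ∀ q ∉ s, ‖f q‖ < M / 2 := by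
    rw [Filter.eventually_cofinite] at hev
    exact ⟨hev.toFinset, fun q hq => by
      by_contra hc
      exact hq (hev.mem_toFinset.mpr (not_lt.mp hc |> fun h => not_lt.mpr h))⟩
  set t : Finset (ℕ × Fin g) := insert q₀ s with ht
  have htne : t.Nonempty := Finset.insert_nonempty _ _
  set c : ℝ := t.sup' htne (fun q => if q = q₀ then M / 2 else ‖f q‖) with hc
  have hcM : c < M := by
    rw [hc, Finset.sup'_lt_iff]
    intro q hq
    split_ifs with h
    · linarith
    · exact hlt q h
  have hcM2 : M / 2 ≤ c := by
    rw [hc]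
    have h2 := Finset.le_sup' (fun q => if q = q₀ then M / 2 else ‖f q‖)
      (Finset.mem_insert_self q₀ s)
    rwa [if_pos rfl] at h2
  have hbound : ∀ q, ‖if q = q₀ then (0:K) else f q‖ ≤ c := by
    intro q
    split_ifs with h
    · simp; linarith
    · by_cases hqs : q ∈ t
      · have h2 := Finset.le_sup' (fun q => if q = q₀ then M / 2 else ‖f q‖) hqs
        rwa [if_neg h] at h2
      · have : q ∉ s := fun hq => hqs (Finset.mem_insert_of_mem hq)
        have := hs q this
        linarith
  have htsum : (0:K) = f q₀ + ∑' q, if q = q₀ then (0:K) else f q := by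
    have h0 := Summable.tsum_eq_add_tsum_ite hsum q₀
    rw [hf.tsum_eq] at h0
    exact h0
  have hnorm : ‖∑' q, if q = q₀ then (0:K) else f q‖ ≤ c :=
    IsUltrametricDist.norm_tsum_le_of_forall_le_of_nonneg (by linarith) hbound
  have heq : f q₀ = -∑' q, if q = q₀ then (0:K) else f q :=
    eq_neg_of_add_eq_zero_left htsum.symm
  have : M ≤ c := by rw [hMdef, heq, norm_neg]; exact hnorm
  linarith

set_option maxHeartbeats 2000000 in
/-- (Lemma on properness for common zeros.)  Let `K` be a complete
nonarchimedean field with `‖p‖ = p⁻¹`, and suppose the valuations of the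
coefficients `b_{n,i,j}` satisfy Hypotheses (H).  If `ξ` is a common zero of the
`g` series `Σ_j Σ_m b_{m,i,j}·ξ_j^{p^m}`, then: (1) for `1 ≤ n ≤ N`, if
`ord(ξ_k) > r_n = 1/(p^n(p−1))` for all `k`, then
`ord(ξ_k) ≥ r_n' = 1/(p^{n−1}(p−1)) − H/(p−1)` for all `k`; and (2) if
`ord(ξ_k) > 1/(p−1)` for all `k`, then `ξ = 0`. -/
theorem common_zero_properness (p N g : ℕ) (hp : p.Prime) (hN : 1 ≤ N) (hg : 1 ≤ g)
    (K : Type*) [NontriviallyNormedField K] [CompleteSpace K]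
    (hna : ∀ x y : K, ‖x + y‖ ≤ max ‖x‖ ‖y‖)
    (hpnorm : ‖(p : K)‖ = ((p : ℝ))⁻¹)
    (H : ℝ) (U : Fin g → ℝ)
    (hH0 : 0 ≤ H) (hHN : H < ((p : ℝ) - 1) / (p : ℝ) ^ N)
    (hU0 : ∀ i, 0 ≤ U i) (hUsum : ∑ i, U i = H)
    (b : ℕ → Fin g → Fin g → K)
    (hb : SatisfiesHyp p U (fun n i j => ordOf p (b n i j)))
    (ξ : Fin g → K)
    (hroot : ∀ i : Fin g,
      HasSum (fun q : ℕ × Fin g => b q.1 i q.2 * ξ q.2 ^ (p ^ q.1)) 0) :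
    (∀ n : ℕ, 1 ≤ n → n ≤ N →
      (∀ k, ((1 / ((p : ℝ) ^ n * ((p : ℝ) - 1)) : ℝ) : EReal) < ordOf p (ξ k)) →
      ∀ k, ((1 / ((p : ℝ) ^ (n - 1) * ((p : ℝ) - 1)) - H / ((p : ℝ) - 1) : ℝ) : EReal)
          ≤ ordOf p (ξ k)) ∧
    ((∀ k, ((1 / ((p : ℝ) - 1) : ℝ) : EReal) < ordOf p (ξ k)) → ξ = 0) := by
  have hP1 : (1:ℝ) < (p:ℝ) := by exact_mod_cast hp.one_lt
  have hP0 : (0:ℝ) < (p:ℝ) := by linarith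
  have hPd : (0:ℝ) < (p:ℝ) - 1 := by linarith
  have hultra : IsUltrametricDist K :=
    IsUltrametricDist.isUltrametricDist_of_forall_norm_add_le_max_norm hna
  obtain ⟨hb1, hb2, hb3, hb4, hb5, hb6⟩ := hb
  have hb1' : ∀ i, ordOf p (b 0 i i) = 0 := hb1
  have hb2' : ∀ i j, i ≠ j → ordOf p (b 0 i j) = ⊤ := hb2
  have hb3' : ∀ (i : Fin g) (m : ℕ), 1 ≤ m → ((p : ℝ) ^ m - 1) / ((p : ℝ) - 1) * U i < 1 →
      ordOf p (b m i i) = ((((p : ℝ) ^ m - 1) / ((p : ℝ) - 1) * U i - m : ℝ) : EReal) := hb3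
  have hb4' : ∀ (i : Fin g) (m : ℕ), 1 ≤ ((p : ℝ) ^ m - 1) / ((p : ℝ) - 1) * U i →
      ((1 - m : ℝ) : EReal) ≤ ordOf p (b m i i) := hb4
  have hb5' : ∀ (i j : Fin g) (m : ℕ), ((-m : ℝ) : EReal) ≤ ordOf p (b m i j) := hb5
  have hb6' : ∀ (i j : Fin g) (m : ℕ), j < i → ((1 - m : ℝ) : EReal) ≤ ordOf p (b m i j) := hb6
  have hgne : Nonempty (Fin g) := ⟨⟨0, hg⟩⟩
  have hune : (Finset.univ : Finset (Fin g)).Nonempty := Finset.univ_nonempty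
  have hUH : ∀ i, U i ≤ H := by
    intro i
    rw [← hUsum]
    exact Finset.single_le_sum (fun l _ => hU0 l) (Finset.mem_univ i)
  -- norm bound from hb5'
  have nb_all : ∀ (m : ℕ) (i j : Fin g), ‖b m i j‖ ≤ (p:ℝ) ^ ((m:ℕ):ℝ) := by
    intro m i j
    have h := (le_ordOf_iff hP1 (-((m:ℕ):ℝ)) _).mp (by exact_mod_cast hb5' i j m)
    rwa [neg_neg] at h
  have nb_lt : ∀ (m : ℕ) (i j : Fin g), j < i → ‖b m i j‖ ≤ (p:ℝ) ^ (((m:ℕ):ℝ) - 1) := by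
    intro m i j hji
    have h := (le_ordOf_iff hP1 (1 - ((m:ℕ):ℝ)) _).mp (by exact_mod_cast hb6' i j m hji)
    rwa [neg_sub] at h
  have nb_diag_ge : ∀ (m : ℕ) (i : Fin g), 1 ≤ ((p : ℝ) ^ m - 1) / ((p : ℝ) - 1) * U i →
      ‖b m i i‖ ≤ (p:ℝ) ^ (((m:ℕ):ℝ) - 1) := by
    intro m i hcnd
    have h := (le_ordOf_iff hP1 (1 - ((m:ℕ):ℝ)) _).mp (by exact_mod_cast hb4' i m hcnd)
    rwa [neg_sub] at h
  have nb0 : ∀ i, ‖b 0 i i‖ = 1 := by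
    intro i
    have h := ordOf_eq_norm hP1 0 _ (by exact_mod_cast hb1' i)
    rw [h, neg_zero, Real.rpow_zero]
  constructor
  · -- Part (1)
    intro n hn1 hnN hord k₀
    by_contra hcon
    set P := (p:ℝ) with hPdef
    set β' : ℝ := 1 / (P - 1) with hβ'def
    have hβ'0 : 0 < β' := by rw [hβ'def]; positivity
    set rn : ℝ := 1 / (P^n * (P-1)) with hrndef
    set ρ : ℝ := 1 / (P^(n-1) * (P-1)) with hρdef
    have hPn0 : (0:ℝ) < P ^ n := by positivity
    have hPn1pos : (0:ℝ) < P ^ (n-1) := by positivity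
    have hrn0 : 0 < rn := by rw [hrndef]; positivity
    have hρ0 : 0 < ρ := by rw [hρdef]; positivity
    have hpowsucc : P ^ (n-1) * P = P ^ n := by
      rw [← pow_succ]; congr 1; omega
    -- cast helper
    have hc : ∀ m : ℕ, ((p ^ m : ℕ) : ℝ) = P ^ m := by
      intro m; push_cast; rfl
    have hcondU : ∀ m : ℕ, m ≤ N → ∀ i, (P ^ m - 1) / (P - 1) * U i < 1 := by
      intro m hm i
      have hm1 : (1:ℝ) ≤ P ^ m := by simpa using pow_le_pow_right₀ hP1.le (Nat.zero_le m)
      have hN1 : (1:ℝ) ≤ P ^ N := by simpa using pow_le_pow_right₀ hP1.le (Nat.zero_le N)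
      have hmn : P ^ m ≤ P ^ N := pow_le_pow_right₀ hP1.le hm
      have hPN0 : (0:ℝ) < P ^ N := by positivity
      have h2 : (0:ℝ) ≤ (P ^ m - 1) / (P - 1) := by
        apply div_nonneg (by linarith) hPd.le
      have h2' : (0:ℝ) ≤ (P ^ N - 1) / (P - 1) := by
        apply div_nonneg (by linarith) hPd.le
      have h1 : (P ^ m - 1) / (P - 1) * U i ≤ (P ^ N - 1) / (P - 1) * H :=
        calc (P ^ m - 1) / (P - 1) * U i ≤ (P ^ m - 1) / (P - 1) * H :=
              mul_le_mul_of_nonneg_left (hUH i) h2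
          _ ≤ (P ^ N - 1) / (P - 1) * H := by
              apply mul_le_mul_of_nonneg_right _ hH0
              exact (div_le_div_iff_of_pos_right hPd).mpr (by linarith)
      have h3 : (P ^ N - 1) / (P - 1) * H < 1 := by
        have h4 : (P ^ N - 1) / (P - 1) * H ≤ (P ^ N - 1) / (P - 1) * ((P-1)/P^N) :=
          mul_le_mul_of_nonneg_left hHN.le h2'
        have h5 : (P ^ N - 1) / (P - 1) * ((P-1)/P^N) = (P ^ N - 1) / P ^ N := by
          field_simp
        have h6 : (P ^ N - 1) / P ^ N < 1 := by
          rw [div_lt_one hPN0]; linarith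
        linarith
      linarith
    -- contradiction hypothesis in norm form
    have hxk₀ : P ^ (-(ρ - H / (P - 1))) < ‖ξ k₀‖ := by
      by_contra h
      push_neg at h
      exact hcon ((le_ordOf_iff hP1 (ρ - H / (P - 1)) _).mpr h)
    have hxall : ∀ j, ‖ξ j‖ < P ^ (-rn) := fun j => (lt_ordOf_iff hP1 _ _).mp (hord j)
    -- the weights
    set Q : Fin g → ℝ := fun j => ∑ l, if j ≤ l then U l else 0 with hQdef
    set d : Fin g → ℝ := fun j => Q j * β' with hddef
    have hQ0 : ∀ j, 0 ≤ Q j := by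
      intro j
      apply Finset.sum_nonneg
      intro l _
      split_ifs
      · exact hU0 l
      · exact le_refl 0
    have hQH : ∀ j, Q j ≤ H := by
      intro j
      rw [← hUsum]
      apply Finset.sum_le_sum
      intro l _
      split_ifs
      · exact le_refl _
      · exact hU0 l
    have hUQ : ∀ j, U j ≤ Q j := by
      intro j
      have h := Finset.single_le_sum (f := fun l => if j ≤ l then U l else 0)
        (fun l _ => by split_ifs; exacts [hU0 l, le_refl 0]) (Finset.mem_univ j)
      simpa using h
    have hQgap : ∀ j j', j < j' → Q j' + U j ≤ Q j := by
      intro j j' hjj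
      have hpt : ∀ l, (if j' ≤ l then U l else 0) + (if l = j then U l else 0)
          ≤ (if j ≤ l then U l else 0) := by
        intro l
        by_cases h1 : j' ≤ l
        · have hjl : j ≤ l := le_of_lt (lt_of_lt_of_le hjj h1)
          have hne : l ≠ j := by
            intro h
            rw [h] at h1
            exact absurd h1 (not_le.mpr hjj)
          simp [h1, hjl, hne]
        · by_cases h2 : l = j
          · subst h2
            simp [h1]
          · simp only [if_neg h1, if_neg h2, add_zero]
            split_ifs
            · exact hU0 l
            · exact le_refl 0
      have hsum2 : (∑ l, ((if j' ≤ l then U l else 0) + (if l = j then U l else 0)))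
          ≤ ∑ l, (if j ≤ l then U l else 0) := Finset.sum_le_sum (fun l _ => hpt l)
      rw [Finset.sum_add_distrib] at hsum2
      have hsingle : (∑ l, if l = j then U l else 0) = U j := by
        rw [Finset.sum_ite_eq' Finset.univ j U]
        simp
      rw [hsingle] at hsum2
      exact hsum2
    have hdd : ∀ j, d j = Q j * β' := fun j => rfl
    have hd0 : ∀ j, 0 ≤ d j := fun j => mul_nonneg (hQ0 j) hβ'0.le
    have hdH : ∀ j, d j ≤ H * β' := fun j => mul_le_mul_of_nonneg_right (hQH j) hβ'0.le
    -- choose the pivot index k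
    set F : Fin g → ℝ := fun j => ‖ξ j‖ * P ^ (-(d j)) with hFdef
    set T : ℝ := Finset.univ.sup' hune F with hTdef
    have hFle : ∀ j, F j ≤ T := fun j => Finset.le_sup' F (Finset.mem_univ j)
    set S : Finset (Fin g) := Finset.univ.filter (fun j => F j = T) with hSdef
    have hSne : S.Nonempty := by
      obtain ⟨j0, -, hj0⟩ := Finset.exists_mem_eq_sup' hune F
      exact ⟨j0, Finset.mem_filter.mpr ⟨Finset.mem_univ _, hj0.symm⟩⟩
    set k : Fin g := S.max' hSne with hkdef
    have hFk : F k = T := (Finset.mem_filter.mp (S.max'_mem hSne)).2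
    have hFlt : ∀ j, k < j → F j < T := by
      intro j hj
      rcases lt_or_eq_of_le (hFle j) with h | h
      · exact h
      · exact absurd (S.le_max' j (Finset.mem_filter.mpr ⟨Finset.mem_univ _, h⟩))
          (not_le.mpr hj)
    have hβH : H / (P - 1) = H * β' := by rw [hβ'def]; ring
    have hTlb : P ^ (-ρ) < T := by
      have h1 : P ^ (-(ρ - H/(P-1))) * P ^ (-(d k₀)) < F k₀ := by
        rw [hFdef]
        exact mul_lt_mul_of_pos_right hxk₀ (by positivity)
      have h2 : P ^ (-ρ) ≤ P ^ (-(ρ - H/(P-1))) * P ^ (-(d k₀)) := by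
        rw [← Real.rpow_add hP0]
        apply Real.rpow_le_rpow_left_iff hP1 |>.mpr
        have h3 := hdH k₀
        rw [hβH]
        linarith only [h3]
      linarith only [h1, h2, hFle k₀]
    have hT0 : 0 < T := lt_trans (by positivity) hTlb
    set τ : ℝ := -Real.logb P T with hτdef
    have hTτ : T = P ^ (-τ) := by
      rw [hτdef, neg_neg, Real.rpow_logb hP0 (by linarith) hT0]
    have hτρ : τ < ρ := by
      rw [hTτ] at hTlb
      have h := (Real.rpow_lt_rpow_left_iff hP1).mp hTlb
      linarith only [h]
    have hxk : ‖ξ k‖ = P ^ (d k - τ) := by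
      have h1 : ‖ξ k‖ * P ^ (-(d k)) = P ^ (-τ) := by rw [← hTτ, ← hFk]
      have h2 : ‖ξ k‖ = ‖ξ k‖ * P ^ (-(d k)) * P ^ (d k) := by
        rw [mul_assoc, ← Real.rpow_add hP0, neg_add_cancel, Real.rpow_zero, mul_one]
      rw [h2, h1, ← Real.rpow_add hP0]
      congr 1
      ring
    have hxj : ∀ j, ‖ξ j‖ ≤ P ^ (d j - τ) := by
      intro j
      have h1 : ‖ξ j‖ * P ^ (-(d j)) ≤ P ^ (-τ) := hTτ ▸ hFle j
      have h2 : ‖ξ j‖ = ‖ξ j‖ * P ^ (-(d j)) * P ^ (d j) := by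
        rw [mul_assoc, ← Real.rpow_add hP0, neg_add_cancel, Real.rpow_zero, mul_one]
      rw [h2]
      calc ‖ξ j‖ * P ^ (-(d j)) * P ^ (d j) ≤ P ^ (-τ) * P ^ (d j) :=
            mul_le_mul_of_nonneg_right h1 (by positivity)
        _ = P ^ (d j - τ) := by rw [← Real.rpow_add hP0]; congr 1; ring
    have hxjs : ∀ j, k < j → ‖ξ j‖ < P ^ (d j - τ) := by
      intro j hkj
      have h1 : ‖ξ j‖ * P ^ (-(d j)) < P ^ (-τ) := hTτ ▸ hFlt j hkj
      have h2 : ‖ξ j‖ = ‖ξ j‖ * P ^ (-(d j)) * P ^ (d j) := by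
        rw [mul_assoc, ← Real.rpow_add hP0, neg_add_cancel, Real.rpow_zero, mul_one]
      rw [h2]
      calc ‖ξ j‖ * P ^ (-(d j)) * P ^ (d j) < P ^ (-τ) * P ^ (d j) :=
            mul_lt_mul_of_pos_right h1 (by positivity)
        _ = P ^ (d j - τ) := by rw [← Real.rpow_add hP0]; congr 1; ring
    have hvk : rn < τ - d k := by
      have h1 := hxall k
      rw [hxk] at h1
      have h := (Real.rpow_lt_rpow_left_iff hP1).mp h1
      linarith only [h]
    -- arithmetic facts
    have hwk : (τ - d k) + β' * U k ≤ τ := by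
      have h1 : U k * β' ≤ Q k * β' := mul_le_mul_of_nonneg_right (hUQ k) hβ'0.le
      have h2 := hdd k
      linarith only [h1, h2]
    clear_value Q d F T S k τ
    set EU : ℝ := (P ^ n - 1) / (P - 1) * U k with hEUdef
    have hEUeq : EU = P ^ n * (β' * U k) - β' * U k := by
      rw [hEUdef, hβ'def]
      field_simp
    have hβU0 : 0 ≤ β' * U k := mul_nonneg hβ'0.le (hU0 k)
    have hEU1 : EU < 1 := hcondU n hnN k
    have hPH1 : P ^ n * (β' * H) < 1 := by
      have hHN' : H * P ^ N < P - 1 := (lt_div_iff₀ (by positivity)).mp hHN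
      have h1 : β' * H < 1 / P ^ N := by
        rw [hβ'def, div_mul_eq_mul_div, div_lt_div_iff₀ hPd (by positivity : (0:ℝ) < P ^ N)]
        nlinarith only [hHN']
      have h2 : P ^ n * (β' * H) ≤ P ^ N * (β' * H) :=
        mul_le_mul_of_nonneg_right (pow_le_pow_right₀ hP1.le hnN)
          (mul_nonneg hβ'0.le hH0)
      have h3 : P ^ N * (β' * H) < P ^ N * (1 / P ^ N) :=
        mul_lt_mul_of_pos_left h1 (by positivity)
      have h4 : P ^ N * (1 / P ^ N) = 1 := by field_simp
      linarith only [h2, h3, h4]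
    have geo1 : ∀ m : ℕ, m ≤ n → (P ^ n - P ^ m) * ρ ≤ (n : ℝ) - m := by
      intro m hm
      have h := my_pow_sub_pow_le hP1.le m n hm
      have hρ1 : P ^ (n-1) * (P - 1) * ρ = 1 := by
        rw [hρdef]
        field_simp
      have h3 : (0:ℝ) ≤ (n:ℝ) - m := by
        have h5 := (Nat.cast_le (α := ℝ)).mpr hm
        linarith only [h5]
      calc (P ^ n - P ^ m) * ρ ≤ ((n:ℝ) - m) * (P ^ (n-1) * (P-1)) * ρ :=
            mul_le_mul_of_nonneg_right h hρ0.le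
        _ = ((n:ℝ) - m) * (P ^ (n-1) * (P-1) * ρ) := by ring
        _ = (n:ℝ) - m := by rw [hρ1, mul_one]
    have geo2 : ∀ m : ℕ, n ≤ m → (m : ℝ) - n ≤ (P ^ m - P ^ n) * rn := by
      intro m hm
      have h := my_pow_sub_pow_ge hP1.le n m hm
      have hrn1 : P ^ n * (P - 1) * rn = 1 := by
        rw [hrndef]
        field_simp
      calc (m:ℝ) - n = ((m:ℝ) - n) * (P ^ n * (P-1) * rn) := by rw [hrn1, mul_one]
        _ = ((m:ℝ) - n) * (P ^ n * (P-1)) * rn := by ring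
        _ ≤ (P ^ m - P ^ n) * rn := mul_le_mul_of_nonneg_right h hrn0.le
    have hPn1 : (1:ℝ) < P ^ n := by
      have h := pow_le_pow_right₀ hP1.le hn1
      rw [pow_one] at h
      linarith only [h, hP1]
    -- gap between powers, strict positivity
    have hpowgap : ∀ m : ℕ, n < m → P ^ n * (P - 1) ≤ P ^ m - P ^ n := by
      intro m hnm
      have h := my_pow_sub_pow_ge hP1.le n m hnm.le
      have h1 : (1:ℝ) ≤ (m:ℝ) - n := by
        have h2 := (Nat.cast_le (α := ℝ)).mpr (Nat.succ_le_of_lt hnm)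
        push_cast at h2
        linarith only [h2]
      have h3 : (0:ℝ) < P ^ n * (P - 1) := by positivity
      nlinarith only [h, h1, h3]
    have hpowgap' : ∀ m : ℕ, m < n → P ^ m * (P - 1) ≤ P ^ n - P ^ m := by
      intro m hmn
      have h := my_pow_sub_pow_ge hP1.le m n hmn.le
      have h1 : (1:ℝ) ≤ (n:ℝ) - m := by
        have h2 := (Nat.cast_le (α := ℝ)).mpr (Nat.succ_le_of_lt hmn)
        push_cast at h2
        linarith only [h2]
      have h3 : (0:ℝ) < P ^ m * (P - 1) := by positivity
      nlinarith only [h, h1, h3]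
    -- the leading term
    set Gexp : ℝ := (n : ℝ) - EU + (d k - τ) * P ^ n with hGdef
    have hbnkk : ‖b n k k‖ = P ^ ((n:ℝ) - EU) := by
      have h := ordOf_eq_norm hP1 _ _ (hb3' k n hn1 (hcondU n hnN k))
      rw [h]
      congr 1
      rw [hEUdef]
      ring
    have hMeq : ‖b n k k * ξ k ^ (p ^ n)‖ = P ^ Gexp := by
      rw [norm_mul, norm_pow, hbnkk, hxk, my_rpow_pow hP0, ← Real.rpow_add hP0]
      congr 1
      rw [hGdef, hc n]
    clear_value EU Gexp
    apply hasSum_zero_contra (hroot k) (n, k)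
    · show (0:ℝ) < ‖b n k k * ξ k ^ (p ^ n)‖
      rw [hMeq]
      positivity
    · rintro ⟨m, j⟩ hq
      show ‖b m k j * ξ j ^ (p ^ m)‖ < ‖b n k k * ξ k ^ (p ^ n)‖
      rw [hMeq, norm_mul, norm_pow]
      by_cases hξ0 : ξ j = 0
      · rcases Nat.eq_zero_or_pos m with hm0 | hm1
        · subst hm0
          by_cases hjk : j = k
          · subst j
            exfalso
            rw [hξ0, norm_zero] at hxk
            exact absurd hxk.symm (by positivity : (0:ℝ) < P ^ (d k - τ)).ne'
          · rw [ordOf_top_eq_zero _ (hb2' k j (fun h => hjk h.symm)), norm_zero, zero_mul]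
            positivity
        · rw [hξ0, norm_zero, zero_pow (pow_ne_zero m hp.pos.ne'), mul_zero]
          positivity
      have hxpos : 0 < ‖ξ j‖ := norm_pos_iff.mpr hξ0
      by_cases hjk : j = k
      · -- diagonal
        subst j
        have hmn : m ≠ n := by
          intro h
          exact hq (by rw [h])
        rcases Nat.eq_zero_or_pos m with hm0 | hm1
        · -- m = 0
          subst hm0
          rw [nb0 k, one_mul, pow_zero, pow_one, hxk]
          apply Real.rpow_lt_rpow_left_iff hP1 |>.mpr
          rw [hGdef]
          have p1 : (P ^ n - 1) * ((τ - d k) + β' * U k) ≤ (P ^ n - 1) * τ :=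
            mul_le_mul_of_nonneg_left hwk (by linarith only [hPn1])
          have p2 : (P ^ n - 1) * τ < (P ^ n - 1) * ρ :=
            mul_lt_mul_of_pos_left hτρ (by linarith only [hPn1])
          have p3 := geo1 0 (Nat.zero_le n)
          rw [pow_zero] at p3
          push_cast at p3
          nlinarith only [p1, p2, p3, hEUeq]
        · -- m ≥ 1
          by_cases hcm : (P ^ m - 1) / (P - 1) * U k < 1
          · -- formula regime
            have hbm : ‖b m k k‖ = P ^ ((m:ℝ) - (P ^ m - 1) / (P - 1) * U k) := by
              have h := ordOf_eq_norm hP1 _ _ (hb3' k m hm1 hcm)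
              rw [h]
              congr 1
              ring
            rw [hbm]
            have hEUm : (P ^ m - 1) / (P - 1) * U k = P ^ m * (β' * U k) - β' * U k := by
              rw [hβ'def]
              field_simp
            apply combo₁ hP1 (le_of_eq rfl) (norm_nonneg _) (hxj k) (p ^ m)
            rw [hc m, hGdef]
            rcases Nat.lt_or_ge m n with hmlt | hmge
            · have hpos : (0:ℝ) < P ^ n - P ^ m := by
                have h1 := hpowgap' m hmlt
                have h2 : (0:ℝ) < P ^ m * (P - 1) := by positivity
                linarith only [h1, h2]
              have p1 : (P ^ n - P ^ m) * ((τ - d k) + β' * U k) ≤ (P ^ n - P ^ m) * τ :=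
                mul_le_mul_of_nonneg_left hwk hpos.le
              have p2 : (P ^ n - P ^ m) * τ < (P ^ n - P ^ m) * ρ :=
                mul_lt_mul_of_pos_left hτρ hpos
              have p3 := geo1 m hmlt.le
              nlinarith only [p1, p2, p3, hEUeq, hEUm]
            · have hnm : n < m := lt_of_le_of_ne hmge (Ne.symm hmn)
              have hpos : (0:ℝ) < P ^ m - P ^ n := by
                have h1 := hpowgap m hnm
                have h2 : (0:ℝ) < P ^ n * (P - 1) := by positivity
                linarith only [h1, h2]
              have hAin : rn < (τ - d k) + β' * U k := by linarith only [hvk, hβU0]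
              have p2 : (P ^ m - P ^ n) * rn < (P ^ m - P ^ n) * ((τ - d k) + β' * U k) :=
                mul_lt_mul_of_pos_left hAin hpos
              have p3 := geo2 m hnm.le
              nlinarith only [p2, p3, hEUeq, hEUm]
          · -- large regime : m > N ≥ n
            have hNm : N < m := by
              by_contra h
              push_neg at h
              exact hcm (hcondU m h k)
            have hnm : n < m := lt_of_le_of_lt hnN hNm
            have hbm : ‖b m k k‖ ≤ P ^ (((m:ℕ):ℝ) - 1) := nb_diag_ge m k (not_lt.mp hcm)
            apply combo₁ hP1 hbm (norm_nonneg _) (hxj k) (p ^ m)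
            rw [hc m, hGdef]
            have hpos : (0:ℝ) < P ^ m - P ^ n := by
              have h1 := hpowgap m hnm
              have h2 : (0:ℝ) < P ^ n * (P - 1) := by positivity
              linarith only [h1, h2]
            have p2 : (P ^ m - P ^ n) * rn < (P ^ m - P ^ n) * (τ - d k) :=
              mul_lt_mul_of_pos_left hvk hpos
            have p3 := geo2 m hnm.le
            nlinarith only [p2, p3, hEU1]
      · -- off-diagonal
        rcases Nat.eq_zero_or_pos m with hm0 | hm1
        · subst hm0
          rw [ordOf_top_eq_zero _ (hb2' k j (fun h => hjk h.symm)), norm_zero, zero_mul]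
          positivity
        rcases lt_or_gt_of_ne hjk with hjlt | hjgt
        · -- j < k
          have hgap2 : d j ≤ d k + β' * (H - U k) := by
            have h1 := hQH j
            have h2 := hUQ k
            have h3 : Q j * β' ≤ (Q k + (H - U k)) * β' :=
              mul_le_mul_of_nonneg_right (by linarith only [h1, h2]) hβ'0.le
            have h4 := hdd j
            have h5 := hdd k
            nlinarith only [h3, h4, h5]
          have hbm : ‖b m k j‖ ≤ P ^ (((m:ℕ):ℝ) - 1) := nb_lt m k j hjlt
          have hx1 := mul_le_mul_of_nonneg_left hgap2 (by positivity : (0:ℝ) ≤ P ^ n)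
          rw [mul_add] at hx1
          rcases Nat.lt_or_ge n m with hnm | hmn
          · -- m > n : splitting
            have hle : p ^ n ≤ p ^ m := Nat.pow_le_pow_right hp.pos hnm.le
            have hltp : p ^ n < p ^ m := Nat.pow_lt_pow_right hp.one_lt hnm
            have hsplit : p ^ m = p ^ n + (p ^ m - p ^ n) := (Nat.add_sub_cancel' hle).symm
            rw [hsplit]
            apply combo₃ hP1 hbm (norm_nonneg _) hxpos (hxj j) (hxall j)
              (p ^ n) (p ^ m - p ^ n) (Nat.sub_ne_zero_of_lt hltp)
            rw [hc n, Nat.cast_sub hle, hc m, hc n, hGdef]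
            have p3 := geo2 m hnm.le
            nlinarith only [hx1, p3, hEUeq, hβU0, hPH1]
          · -- 1 ≤ m ≤ n
            apply combo₁ hP1 hbm (norm_nonneg _) (hxj j) (p ^ m)
            rw [hc m, hGdef]
            have hPmn : P ^ m ≤ P ^ n := pow_le_pow_right₀ hP1.le hmn
            have p2 : P ^ m * d j ≤ P ^ n * d j :=
              mul_le_mul_of_nonneg_right hPmn (hd0 j)
            have p3 : (P ^ n - P ^ m) * τ ≤ (P ^ n - P ^ m) * ρ :=
              mul_le_mul_of_nonneg_left hτρ.le (by linarith only [hPmn])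
            have p4 := geo1 m hmn
            nlinarith only [hx1, p2, p3, p4, hEUeq, hβU0, hPH1]
        · -- k < j
          have hgap : d j + β' * U k ≤ d k := by
            have h1 := hQgap k j hjgt
            have h2 : (Q j + U k) * β' ≤ Q k * β' :=
              mul_le_mul_of_nonneg_right h1 hβ'0.le
            have h3 := hdd j
            have h4 := hdd k
            nlinarith only [h2, h3, h4]
          have hbm : ‖b m k j‖ ≤ P ^ ((m:ℕ):ℝ) := nb_all m k j
          have hx1 := mul_le_mul_of_nonneg_left hgap (by positivity : (0:ℝ) ≤ P ^ n)
          rw [mul_add] at hx1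
          rcases Nat.lt_or_ge n m with hnm | hmn
          · -- m > n
            have hle : p ^ n ≤ p ^ m := Nat.pow_le_pow_right hp.pos hnm.le
            have hltp : p ^ n < p ^ m := Nat.pow_lt_pow_right hp.one_lt hnm
            have hsplit : p ^ m = p ^ n + (p ^ m - p ^ n) := (Nat.add_sub_cancel' hle).symm
            rw [hsplit]
            apply combo₃ hP1 hbm (norm_nonneg _) hxpos (hxj j) (hxall j)
              (p ^ n) (p ^ m - p ^ n) (Nat.sub_ne_zero_of_lt hltp)
            rw [hc n, Nat.cast_sub hle, hc m, hc n, hGdef]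
            have p3 := geo2 m hnm.le
            nlinarith only [hx1, p3, hEUeq, hβU0]
          · -- 1 ≤ m ≤ n
            apply combo₂ hP1 hbm (norm_nonneg _) hxpos (hxjs j hjgt) (p ^ m)
              (pow_ne_zero m hp.pos.ne')
            rw [hc m, hGdef]
            have hPmn : P ^ m ≤ P ^ n := pow_le_pow_right₀ hP1.le hmn
            have p2 : P ^ m * d j ≤ P ^ n * d j :=
              mul_le_mul_of_nonneg_right hPmn (hd0 j)
            have p3 : (P ^ n - P ^ m) * τ ≤ (P ^ n - P ^ m) * ρ :=
              mul_le_mul_of_nonneg_left hτρ.le (by linarith only [hPmn])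
            have p4 := geo1 m hmn
            nlinarith only [hx1, p2, p3, p4, hEUeq, hβU0]
  · -- Part (2)
    intro hlt
    by_contra hne
    set P := (p:ℝ) with hPdef
    obtain ⟨k₀, hk₀⟩ : ∃ k₀, ξ k₀ ≠ 0 := by
      by_contra h
      push_neg at h
      exact hne (funext h)
    have hx : ∀ j, ‖ξ j‖ < P ^ (-(1/(P-1))) := fun j => (lt_ordOf_iff hP1 _ _).mp (hlt j)
    obtain ⟨k, -, hkT⟩ := Finset.exists_mem_eq_sup' hune (fun j => ‖ξ j‖)
    set T := Finset.univ.sup' hune (fun j => ‖ξ j‖) with hTdef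
    have hTj : ∀ j, ‖ξ j‖ ≤ T := fun j =>
      Finset.le_sup' (fun j => ‖ξ j‖) (Finset.mem_univ j)
    have hT0 : 0 < T := lt_of_lt_of_le (norm_pos_iff.mpr hk₀) (hTj k₀)
    have hTb : T < P ^ (-(1/(P-1))) := by rw [hkT]; exact hx k
    have hfq0 : ‖b 0 k k * ξ k ^ (p ^ 0)‖ = T := by
      rw [norm_mul, nb0 k, one_mul, pow_zero, pow_one, hkT]
    apply absurd hne
    simp only [not_not]
    exfalso
    apply hasSum_zero_contra (hroot k) (0, k)
    · exact hfq0 ▸ hT0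
    · rintro ⟨m, j⟩ hq
      rw [hfq0]
      show ‖b m k j * ξ j ^ (p ^ m)‖ < T
      match m with
      | 0 =>
        have hjk : j ≠ k := by
          intro h
          exact hq (by simp [h])
        have hz : b 0 k j = 0 := ordOf_top_eq_zero _ (hb2' k j (Ne.symm hjk))
        rw [hz, zero_mul, norm_zero]
        exact hT0
      | (m+1) =>
        rw [norm_mul, norm_pow]
        set e : ℕ := p ^ (m+1) with hedef
        have he1 : 1 ≤ e := Nat.one_le_iff_ne_zero.mpr (pow_ne_zero _ hp.pos.ne')
        have he2 : 2 ≤ e := by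
          calc (2:ℕ) = 2^1 := (pow_one 2).symm
          _ ≤ 2^(m+1) := Nat.pow_le_pow_right (by norm_num) (by omega)
          _ ≤ p^(m+1) := Nat.pow_le_pow_left hp.two_le _
        have hecast : (e : ℝ) = P ^ (m+1) := by
          rw [hedef]; push_cast; rfl
        have hbb : ‖b (m+1) k j‖ ≤ P ^ (((m+1:ℕ) : ℝ)) := nb_all (m+1) k j
        have hξT : ‖ξ j‖ ^ e ≤ T ^ e := pow_le_pow_left₀ (norm_nonneg _) (hTj j) e
        have hTsplit : T ^ e = T * T ^ (e - 1) := by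
          conv_lhs => rw [show e = 1 + (e-1) by omega]
          rw [pow_add, pow_one]
        have hTe : T ^ (e-1) < (P ^ (-(1/(P-1)))) ^ (e-1) :=
          pow_lt_pow_left₀ hTb hT0.le (by omega)
        have hPe : (P ^ (-(1/(P-1)))) ^ (e-1) = P ^ (-(1/(P-1)) * ((e-1:ℕ):ℝ)) :=
          my_rpow_pow hP0 _ _
        have hkey : P ^ (((m+1:ℕ):ℝ)) * P ^ (-(1/(P-1)) * ((e-1:ℕ):ℝ)) ≤ 1 := by
          rw [← Real.rpow_add hP0]
          apply Real.rpow_le_one_of_one_le_of_nonpos hP1.le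
          have hgeo := my_pow_sub_pow_ge hP1.le 0 (m+1) (by omega)
          have he1cast : ((e - 1 : ℕ) : ℝ) = (e:ℝ) - 1 := by
            push_cast [Nat.cast_sub he1]
            ring
          rw [he1cast, hecast]
          simp only [pow_zero, Nat.cast_zero, one_mul, sub_zero] at hgeo
          have h3 : ((m+1:ℕ):ℝ) ≤ (P^(m+1)-1)/(P-1) := (le_div_iff₀ hPd).mpr hgeo
          have h4 : (1/(P-1))*(P^(m+1)-1) = (P^(m+1)-1)/(P-1) := by ring
          nlinarith only [h3, h4]
        calc ‖b (m+1) k j‖ * ‖ξ j‖ ^ e ≤ P ^ (((m+1:ℕ):ℝ)) * ‖ξ j‖ ^ e := by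
              apply mul_le_mul_of_nonneg_right hbb (by positivity)
          _ ≤ P ^ (((m+1:ℕ):ℝ)) * T ^ e := by
              apply mul_le_mul_of_nonneg_left hξT (by positivity)
          _ = P ^ (((m+1:ℕ):ℝ)) * (T * T ^ (e-1)) := by rw [hTsplit]
          _ < P ^ (((m+1:ℕ):ℝ)) * (T * (P ^ (-(1/(P-1)))) ^ (e-1)) := by
              apply mul_lt_mul_of_pos_left _ (by positivity)
              exact mul_lt_mul_of_pos_left hTe hT0
          _ = T * (P ^ (((m+1:ℕ):ℝ)) * P ^ (-(1/(P-1)) * ((e-1:ℕ):ℝ))) := by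
              rw [hPe]; ring
          _ ≤ T * 1 := mul_le_mul_of_nonneg_left hkey hT0.le
          _ = T := mul_one T
end
end

section
/- Let M = (α_{ij}) be an h×h matrix over W(R). Assume: ord(w_0(α_{ij})) ≥ 1 whenever g ≥ i > j ≥ 1 (the upper-left g×g block of w_0(M) is upper triangular modulo p); for 1 ≤ i ≤ g set U_i = ord(w_0(α_{ii})) and assume H := U_1 + ⋯ + U_g is finite with H < (p−1)/p^N. Define g×h matrices 𝐚_n over K recursively by 𝐚_0 = [ I_g | 0 ] and 𝐚_{n+1} = 𝐚_n · w_n(M) · 𝐩^{−1}, where 𝐩 is the h×h diagonal matrix whose first g diagonal entries are p and whose remaining diagonal entries are 1. Then the data u_{n,i,j} := ord((𝐚_n)_{i,j}) for 1 ≤ i,j ≤ g, together with N, H and the U_i, satisfy Hypotheses (H); moreover ord((𝐚_n)_{i,j}) ≥ 1 − n for all n ≥ 0 and all g < j ≤ h. -/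
open scoped BigOperators

noncomputable section

section Aux
variable {K : Type*} [Field K] (ord : K → EReal)

lemma aux_ord_one
    (hordmul : ∀ x y : K, ord (x * y) = ord x + ord y)
    {π : K} (hπ : ord π = 1) : ord (1 : K) = 0 := by
  have h := hordmul π 1
  rw [mul_one, hπ] at h
  generalize hx : ord (1 : K) = x at h ⊢
  induction x using EReal.rec with
  | bot =>
    rw [EReal.add_bot] at h
    exact absurd h (by rw [← EReal.coe_one]; exact EReal.coe_ne_bot 1)
  | coe r =>
    rw [← EReal.coe_one, ← EReal.coe_add] at h
    norm_cast at h ⊢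
    linarith
  | top =>
    rw [← EReal.coe_one, EReal.coe_add_top] at h
    exact absurd h (EReal.coe_ne_top 1)

lemma aux_ord_neg
    (hordmul : ∀ x y : K, ord (x * y) = ord x + ord y)
    {π : K} (hπ : ord π = 1) (x : K) : ord (-x) = ord x := by
  have h1 : ord (-1 : K) = 0 := by
    have h := hordmul (-1 : K) (-1)
    rw [neg_mul_neg, one_mul, aux_ord_one ord hordmul hπ] at h
    generalize hx : ord (-1 : K) = y at h ⊢
    induction y using EReal.rec with
    | bot =>
      rw [EReal.add_bot] at h
      exact absurd h (by rw [← EReal.coe_zero]; exact EReal.coe_ne_bot 0)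
    | coe r =>
      rw [← EReal.coe_add] at h
      norm_cast at h ⊢
      linarith
    | top =>
      rw [EReal.top_add_top] at h
      exact absurd h (by rw [← EReal.coe_zero]; exact EReal.coe_ne_top 0)
  rw [show -x = (-1 : K) * x by ring, hordmul, h1, zero_add]

lemma aux_ord_add_eq
    (hordmul : ∀ x y : K, ord (x * y) = ord x + ord y)
    (hordadd : ∀ x y : K, min (ord x) (ord y) ≤ ord (x + y))
    {π : K} (hπ : ord π = 1) (x y : K) (h : ord x < ord y) :
    ord (x + y) = ord x := by
  refine le_antisymm ?_ ?_
  · have h2 := hordadd (x + y) (-y)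
    have e : x + y + -y = x := by ring
    rw [e, aux_ord_neg ord hordmul hπ] at h2
    rcases le_or_gt (ord (x + y)) (ord y) with hc | hc
    · rwa [min_eq_left hc] at h2
    · rw [min_eq_right hc.le] at h2
      exact absurd h (not_lt.mpr h2)
  · have h3 := hordadd x y
    rwa [min_eq_left h.le] at h3

lemma aux_ord_sum_ge
    (hord0 : ∀ x : K, ord x = ⊤ ↔ x = 0)
    (hordadd : ∀ x y : K, min (ord x) (ord y) ≤ ord (x + y))
    {ι : Type*} (s : Finset ι) (f : ι → K) (c : EReal)
    (h : ∀ i ∈ s, c ≤ ord (f i)) : c ≤ ord (∑ i ∈ s, f i) := by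
  classical
  induction s using Finset.cons_induction with
  | empty => simp [Finset.sum_empty, (hord0 0).mpr rfl]
  | cons a s ha ih =>
    rw [Finset.sum_cons]
    refine le_trans (le_min (h a (by simp)) (ih fun i hi => h i (by simp [hi]))) (hordadd _ _)

lemma aux_ord_sum_eq
    (hord0 : ∀ x : K, ord x = ⊤ ↔ x = 0)
    (hordmul : ∀ x y : K, ord (x * y) = ord x + ord y)
    (hordadd : ∀ x y : K, min (ord x) (ord y) ≤ ord (x + y))
    {π : K} (hπ : ord π = 1)
    {ι : Type*} [DecidableEq ι] (s : Finset ι) (f : ι → K) (a : ι) (ha : a ∈ s)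
    (c : EReal) (hc : ord (f a) < c) (h : ∀ b ∈ s, b ≠ a → c ≤ ord (f b)) :
    ord (∑ b ∈ s, f b) = ord (f a) := by
  rw [← Finset.add_sum_erase s f ha]
  refine aux_ord_add_eq ord hordmul hordadd hπ _ _ (lt_of_lt_of_le hc ?_)
  exact aux_ord_sum_ge ord hord0 hordadd _ f c
    (fun i hi => h i (Finset.mem_of_mem_erase hi) (Finset.ne_of_mem_erase hi))

lemma aux_ord_pow_nonneg
    (hordmul : ∀ x y : K, ord (x * y) = ord x + ord y)
    {π : K} (hπ : ord π = 1)
    {x : K} (hx : 0 ≤ ord x) (m : ℕ) : 0 ≤ ord (x ^ m) := by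
  induction m with
  | zero => simp [pow_zero, aux_ord_one ord hordmul hπ]
  | succ k ih =>
    rw [pow_succ, hordmul]
    have := add_le_add ih hx
    simpa using this

lemma aux_ord_pow_ge_one
    (hordmul : ∀ x y : K, ord (x * y) = ord x + ord y)
    {π : K} (hπ : ord π = 1)
    {x : K} (hx0 : 0 ≤ ord x) (hx1 : 1 ≤ ord x) {m : ℕ} (hm : m ≠ 0) :
    1 ≤ ord (x ^ m) := by
  obtain ⟨k, rfl⟩ := Nat.exists_eq_succ_of_ne_zero hm
  rw [pow_succ, hordmul]
  have := add_le_add (aux_ord_pow_nonneg ord hordmul hπ hx0 k) hx1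
  simpa using this

lemma aux_ord_pow_eq
    (hordmul : ∀ x y : K, ord (x * y) = ord x + ord y)
    {π : K} (hπ : ord π = 1)
    {x : K} (r : ℝ) (hx : ord x = (r : EReal)) (m : ℕ) :
    ord (x ^ m) = (((m : ℝ) * r : ℝ) : EReal) := by
  induction m with
  | zero => simp [pow_zero, aux_ord_one ord hordmul hπ]
  | succ k ih =>
    rw [pow_succ, hordmul, ih, hx, ← EReal.coe_add]
    congr 1
    push_cast
    ring

lemma aux_ord_inv
    (hordmul : ∀ x y : K, ord (x * y) = ord x + ord y)
    {π : K} (hπ : ord π = 1)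
    {x : K} (hx0 : x ≠ 0) (r : ℝ) (hx : ord x = (r : EReal)) :
    ord x⁻¹ = ((-r : ℝ) : EReal) := by
  have h := hordmul x x⁻¹
  rw [mul_inv_cancel₀ hx0, aux_ord_one ord hordmul hπ, hx] at h
  generalize hy : ord x⁻¹ = y at h ⊢
  induction y using EReal.rec with
  | bot =>
    rw [EReal.add_bot] at h
    exact absurd h (by rw [← EReal.coe_zero]; exact EReal.coe_ne_bot 0)
  | coe s =>
    rw [← EReal.coe_add] at h
    norm_cast at h ⊢
    linarith
  | top =>
    rw [EReal.coe_add_top] at h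
    exact absurd h (by rw [← EReal.coe_zero]; exact EReal.coe_ne_top 0)

end Aux

section Ghost
variable (p : ℕ) [Fact p.Prime] {K : Type*} [Field K] (ord : K → EReal)
  (hord0 : ∀ x : K, ord x = ⊤ ↔ x = 0)
  (hordmul : ∀ x y : K, ord (x * y) = ord x + ord y)
  (hordadd : ∀ x y : K, min (ord x) (ord y) ≤ ord (x + y))
  (hordp : ord (p : K) = 1)
  (Rs : Subring K)
  (hmem : ∀ y : Rs, 0 ≤ ord (y : K))

lemma aux_ghost_sum (x : WittVector p Rs) (n : ℕ) :
    ((WittVector.ghostComponent n x : Rs) : K)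
      = ∑ m ∈ Finset.range (n + 1), (p : K) ^ m * ((x.coeff m : K)) ^ (p ^ (n - m)) := by
  have h : (WittVector.ghostComponent n x : Rs)
      = ∑ m ∈ Finset.range (n + 1), (p : Rs) ^ m * (x.coeff m) ^ (p ^ (n - m)) := by
    rw [WittVector.ghostComponent_apply, aeval_wittPolynomial]
  rw [h]
  push_cast
  ring

include hordmul hordp hmem in
lemma aux_term_ge_one {m : ℕ} (hm : m ≠ 0) (y : Rs) (e : ℕ) :
    (1 : EReal) ≤ ord ((p : K) ^ m * (y : K) ^ e) := by
  have hπ : ord ((p : K)) = 1 := hordp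
  rw [hordmul]
  have h1 : ord ((p : K) ^ m) = (((m : ℝ) * 1 : ℝ) : EReal) :=
    aux_ord_pow_eq ord hordmul hπ 1 (by rw [hordp, EReal.coe_one]) m
  have h2 : (0 : EReal) ≤ ord ((y : K) ^ e) :=
    aux_ord_pow_nonneg ord hordmul hπ (hmem y) e
  have h3 : ((1 : ℝ) : EReal) ≤ ((m : ℝ) * 1 : ℝ) := by
    norm_cast
    simp
    omega
  have := add_le_add h3 h2
  rw [← h1] at this
  simpa using this

include hordmul hordp hmem in
lemma aux_coeff0_ord (x : WittVector p Rs) :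
    ord ((x.coeff 0 : K)) = ord ((WittVector.ghostComponent 0 x : Rs) : K) := by
  rw [aux_ghost_sum]
  simp

include hord0 hordmul hordadd hordp hmem in
lemma aux_ghost_ge_one (x : WittVector p Rs) (n : ℕ)
    (h1 : 1 ≤ ord ((WittVector.ghostComponent 0 x : Rs) : K)) :
    1 ≤ ord ((WittVector.ghostComponent n x : Rs) : K) := by
  have hπ : ord ((p : K)) = 1 := hordp
  rw [← aux_coeff0_ord p ord hordmul hordp Rs hmem] at h1
  rw [aux_ghost_sum]
  refine aux_ord_sum_ge ord hord0 hordadd _ _ _ ?_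
  intro m hm
  rcases eq_or_ne m 0 with rfl | hm0
  · have e : (p : K) ^ 0 * ((x.coeff 0 : K)) ^ (p ^ (n - 0)) = ((x.coeff 0 : K)) ^ (p ^ n) := by
      simp
    rw [e]
    exact aux_ord_pow_ge_one ord hordmul hπ (hmem _) h1
      (pow_ne_zero n (Nat.Prime.ne_zero Fact.out))
  · exact aux_term_ge_one p ord hordmul hordp Rs hmem hm0 _ _

include hord0 hordmul hordadd hordp hmem in
lemma aux_ghost_ge (x : WittVector p Rs) (n : ℕ) (r : ℝ)
    (h0 : ord ((WittVector.ghostComponent 0 x : Rs) : K) = (r : EReal))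
    (hge : 1 ≤ (p : ℝ) ^ n * r) :
    1 ≤ ord ((WittVector.ghostComponent n x : Rs) : K) := by
  have hπ : ord ((p : K)) = 1 := hordp
  rw [← aux_coeff0_ord p ord hordmul hordp Rs hmem] at h0
  rw [aux_ghost_sum]
  refine aux_ord_sum_ge ord hord0 hordadd _ _ _ ?_
  intro m hm
  rcases eq_or_ne m 0 with rfl | hm0
  · have e : (p : K) ^ 0 * ((x.coeff 0 : K)) ^ (p ^ (n - 0)) = ((x.coeff 0 : K)) ^ (p ^ n) := by
      simp
    rw [e, aux_ord_pow_eq ord hordmul hπ r h0]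
    rw [show (1 : EReal) = ((1 : ℝ) : EReal) from EReal.coe_one.symm, EReal.coe_le_coe_iff]
    calc (1 : ℝ) ≤ (p : ℝ) ^ n * r := hge
      _ = ((p ^ n : ℕ) : ℝ) * r := by push_cast; ring
  · exact aux_term_ge_one p ord hordmul hordp Rs hmem hm0 _ _

include hord0 hordmul hordadd hordp hmem in
lemma aux_ghost_eq (x : WittVector p Rs) (n : ℕ) (r : ℝ)
    (h0 : ord ((WittVector.ghostComponent 0 x : Rs) : K) = (r : EReal))
    (hlt : (p : ℝ) ^ n * r < 1) :
    ord ((WittVector.ghostComponent n x : Rs) : K) = (((p : ℝ) ^ n * r : ℝ) : EReal) := by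
  classical
  have hπ : ord ((p : K)) = 1 := hordp
  rw [← aux_coeff0_ord p ord hordmul hordp Rs hmem] at h0
  rw [aux_ghost_sum]
  have hf0 : ord ((p : K) ^ 0 * ((x.coeff 0 : K)) ^ (p ^ (n - 0)))
      = (((p : ℝ) ^ n * r : ℝ) : EReal) := by
    have e : (p : K) ^ 0 * ((x.coeff 0 : K)) ^ (p ^ (n - 0)) = ((x.coeff 0 : K)) ^ (p ^ n) := by
      simp
    rw [e, aux_ord_pow_eq ord hordmul hπ r h0]
    congr 1
    push_cast
    ring
  rw [aux_ord_sum_eq ord hord0 hordmul hordadd hπ (Finset.range (n + 1)) _ 0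
    (Finset.mem_range.mpr (Nat.succ_pos n)) 1 ?_ ?_]
  · exact hf0
  · rw [hf0]
    rw [show (1 : EReal) = ((1 : ℝ) : EReal) from EReal.coe_one.symm, EReal.coe_lt_coe_iff]
    exact hlt
  · intro b _ hb
    exact aux_term_ge_one p ord hordmul hordp Rs hmem hb _ _

end Ghost


/-- (The coefficients of the logarithm satisfy Hypotheses (H).)  Let `M` be an
`h×h` matrix over `W(R)` whose upper-left `g×g` ghost block `w₀(M)` is upper
triangular modulo `p`, with `U_i = ord(w₀(α_{ii}))` and
`H = ΣU_i < (p−1)/p^N`.  Define `𝐚₀ = [I_g | 0]` and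
`𝐚_{n+1} = 𝐚_n·w_n(M)·𝐩⁻¹`.  Then the valuations `u_{n,i,j} = ord((𝐚_n)_{ij})`
(for `1 ≤ i,j ≤ g`) satisfy Hypotheses (H), and moreover
`ord((𝐚_n)_{ij}) ≥ 1 − n` for the columns `g < j ≤ h`. -/
theorem log_coefficients_satisfy_hyp (p : ℕ) [Fact p.Prime]
    (g h N : ℕ) (hg : 1 ≤ g) (hgh : g ≤ h) (hN : 1 ≤ N)
    (K : Type*) [Field K] (ord : K → EReal)
    (hord0 : ∀ x : K, ord x = ⊤ ↔ x = 0)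
    (hordmul : ∀ x y : K, ord (x * y) = ord x + ord y)
    (hordadd : ∀ x y : K, min (ord x) (ord y) ≤ ord (x + y))
    (hordp : ord (p : K) = 1)
    (Rs : Subring K) (hRs : ∀ x : K, x ∈ Rs ↔ 0 ≤ ord x)
    (M : Matrix (Fin h) (Fin h) (WittVector p Rs))
    (hMtri : ∀ i j : Fin h, (i : ℕ) < g → (j : ℕ) < (i : ℕ) →
      (1 : EReal) ≤ ord ((WittVector.ghostComponent 0 (M i j) : Rs) : K))
    (U : Fin g → ℝ)
    (hU : ∀ i : Fin g,
      ord ((WittVector.ghostComponent 0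
        (M (Fin.castLE hgh i) (Fin.castLE hgh i)) : Rs) : K) = ((U i : ℝ) : EReal))
    (H : ℝ) (hHdef : ∑ i, U i = H) (hHN : H < ((p : ℝ) - 1) / (p : ℝ) ^ N)
    (a : ℕ → Matrix (Fin g) (Fin h) K)
    (ha0 : ∀ (i : Fin g) (j : Fin h), a 0 i j = if (j : ℕ) = (i : ℕ) then 1 else 0)
    (harec : ∀ n : ℕ, a (n + 1) =
      a n * (Matrix.of fun i j : Fin h =>
          ((WittVector.ghostComponent n (M i j) : Rs) : K))
        * Matrix.diagonal (fun j : Fin h => if (j : ℕ) < g then ((p : K))⁻¹ else 1)) :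
    SatisfiesHyp p U (fun n i j => ord (a n i (Fin.castLE hgh j))) ∧
    (∀ (n : ℕ) (i : Fin g) (j : Fin h), g ≤ (j : ℕ) →
      ((1 - n : ℝ) : EReal) ≤ ord (a n i j)) := by
  classical
  have hπ : ord ((p : K)) = 1 := hordp
  have hp2 : 2 ≤ p := Nat.Prime.two_le Fact.out
  have hpR : (2 : ℝ) ≤ (p : ℝ) := by exact_mod_cast hp2
  have hp1R : (0 : ℝ) < (p : ℝ) - 1 := by linarith
  have hmem : ∀ y : Rs, 0 ≤ ord (y : K) := fun y => (hRs _).mp y.2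
  have hpK : (p : K) ≠ 0 := by
    intro hc
    have h1 := (hord0 (p : K)).mpr hc
    rw [hordp] at h1
    exact absurd h1 (by rw [← EReal.coe_one]; exact EReal.coe_ne_top 1)
  have hpinv : ord ((p : K)⁻¹) = ((-1 : ℝ) : EReal) :=
    aux_ord_inv ord hordmul hπ hpK 1 (by rw [hordp, EReal.coe_one])
  have hwge0 : ∀ (n : ℕ) (k j : Fin h),
      (0 : EReal) ≤ ord ((WittVector.ghostComponent n (M k j) : Rs) : K) :=
    fun n k j => hmem _
  have hU0 : ∀ i : Fin g, 0 ≤ U i := by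
    intro i
    have h1 := hmem ((WittVector.ghostComponent 0
      (M (Fin.castLE hgh i) (Fin.castLE hgh i)) : Rs))
    rw [hU i] at h1
    exact_mod_cast h1
  have hA : ∀ (n : ℕ) (i : Fin g) (j : Fin h),
      a (n + 1) i j =
        (∑ k : Fin h, a n i k * ((WittVector.ghostComponent n (M k j) : Rs) : K))
          * (if (j : ℕ) < g then (p : K)⁻¹ else 1) := by
    intro n i j
    rw [harec n, Matrix.mul_diagonal, Matrix.mul_apply]
    simp only [Matrix.of_apply]
  -- the main induction
  have key : ∀ n : ℕ,
      (∀ i : Fin g, ((p : ℝ) ^ n - 1) / ((p : ℝ) - 1) * U i < 1 →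
        ord (a n i (Fin.castLE hgh i))
          = ((((p : ℝ) ^ n - 1) / ((p : ℝ) - 1) * U i - n : ℝ) : EReal)) ∧
      (∀ i : Fin g, 1 ≤ ((p : ℝ) ^ n - 1) / ((p : ℝ) - 1) * U i →
        ((1 - n : ℝ) : EReal) ≤ ord (a n i (Fin.castLE hgh i))) ∧
      (∀ (i : Fin g) (k : Fin h), ((-n : ℝ) : EReal) ≤ ord (a n i k)) ∧
      (∀ (i : Fin g) (k : Fin h), ((k : ℕ) < (i : ℕ) ∨ g ≤ (k : ℕ)) →
        ((1 - n : ℝ) : EReal) ≤ ord (a n i k)) := by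
    intro n
    induction n with
    | zero =>
      refine ⟨?_, ?_, ?_, ?_⟩
      · intro i _
        rw [ha0, if_pos (by simp), aux_ord_one ord hordmul hπ]
        norm_num
      · intro i hi
        norm_num at hi
      · intro i k
        rw [ha0]
        split_ifs with hk
        · rw [aux_ord_one ord hordmul hπ]
          norm_num
        · rw [(hord0 0).mpr rfl]
          exact le_top
      · intro i k hk
        rw [ha0]
        rw [if_neg (by omega : ¬ (k : ℕ) = (i : ℕ))]
        · rw [(hord0 0).mpr rfl]
          exact le_top
    | succ n ih =>
      obtain ⟨ih1, ih2, ih3, ih4⟩ := ih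
      have hterm_any : ∀ (i : Fin g) (j k : Fin h),
          ((-n : ℝ) : EReal) ≤
            ord (a n i k * ((WittVector.ghostComponent n (M k j) : Rs) : K)) := by
        intro i j k
        rw [hordmul]
        have h1 := add_le_add (ih3 i k) (hwge0 n k j)
        simpa using h1
      have hterm1 : ∀ (i : Fin g) (j k : Fin h), (j : ℕ) ≤ (i : ℕ) →
          ((k : ℕ) < (i : ℕ) ∨ (j : ℕ) < (k : ℕ)) →
          ((1 - n : ℝ) : EReal) ≤
            ord (a n i k * ((WittVector.ghostComponent n (M k j) : Rs) : K)) := by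
        intro i j k hji hk
        rw [hordmul]
        by_cases hkg : (k : ℕ) < g
        · rcases hk with hk | hk
          · have h1 := add_le_add (ih4 i k (Or.inl hk)) (hwge0 n k j)
            simpa using h1
          · have hw1 : (1 : EReal) ≤ ord ((WittVector.ghostComponent n (M k j) : Rs) : K) :=
              aux_ghost_ge_one p ord hord0 hordmul hordadd hordp Rs hmem _ n
                (hMtri k j hkg hk)
            have h1 := add_le_add (ih3 i k) hw1
            refine le_trans (le_of_eq ?_) h1
            rw [show (1 : EReal) = ((1 : ℝ) : EReal) from EReal.coe_one.symm, ← EReal.coe_add]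
            congr 1
            ring
        · have h1 := add_le_add (ih4 i k (Or.inr (not_lt.mp hkg))) (hwge0 n k j)
          simpa using h1
      have hSany : ∀ (i : Fin g) (j : Fin h),
          ((-n : ℝ) : EReal) ≤ ord (∑ k : Fin h,
            a n i k * ((WittVector.ghostComponent n (M k j) : Rs) : K)) := by
        intro i j
        exact aux_ord_sum_ge ord hord0 hordadd _ _ _ (fun k _ => hterm_any i j k)
      refine ⟨?_, ?_, ?_, ?_⟩
      · -- exact diagonal value
        intro i hv1
        have hr : 0 ≤ U i := hU0 i
        have hpow1 : (1 : ℝ) ≤ (p : ℝ) ^ n := one_le_pow₀ (by linarith)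
        have hvn : ((p : ℝ) ^ n - 1) / ((p : ℝ) - 1) * U i < 1 := by
          refine lt_of_le_of_lt ?_ hv1
          refine mul_le_mul_of_nonneg_right ((div_le_div_iff_of_pos_right hp1R).mpr ?_) hr
          have : (p : ℝ) ^ (n + 1) = (p : ℝ) ^ n * (p : ℝ) := by ring
          nlinarith
        have hpn : (p : ℝ) ^ n * U i < 1 := by
          refine lt_of_le_of_lt ?_ hv1
          have h2 : (p : ℝ) ^ n ≤ ((p : ℝ) ^ (n + 1) - 1) / ((p : ℝ) - 1) := by
            rw [le_div_iff₀ hp1R]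
            have : (p : ℝ) ^ (n + 1) = (p : ℝ) ^ n * (p : ℝ) := by ring
            nlinarith
          exact mul_le_mul_of_nonneg_right h2 hr
        have hdiag_a := ih1 i hvn
        have hdiag_w := aux_ghost_eq p ord hord0 hordmul hordadd hordp Rs hmem
          (M (Fin.castLE hgh i) (Fin.castLE hgh i)) n (U i) (hU i) hpn
        have hterm_i : ord (a n i (Fin.castLE hgh i) *
              ((WittVector.ghostComponent n
                (M (Fin.castLE hgh i) (Fin.castLE hgh i)) : Rs) : K))
            = ((((p : ℝ) ^ (n + 1) - 1) / ((p : ℝ) - 1) * U i - n : ℝ) : EReal) := by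
          rw [hordmul, hdiag_a, hdiag_w, ← EReal.coe_add]
          congr 1
          field_simp
          ring
        have hS : ord (∑ k : Fin h, a n i k *
              ((WittVector.ghostComponent n (M k (Fin.castLE hgh i)) : Rs) : K))
            = ((((p : ℝ) ^ (n + 1) - 1) / ((p : ℝ) - 1) * U i - n : ℝ) : EReal) := by
          rw [aux_ord_sum_eq ord hord0 hordmul hordadd hπ Finset.univ _ (Fin.castLE hgh i)
            (Finset.mem_univ _) (((1 - n : ℝ) : EReal)) ?_ ?_]
          · exact hterm_i
          · rw [hterm_i, EReal.coe_lt_coe_iff]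
            linarith
          · intro k _ hk
            refine hterm1 i (Fin.castLE hgh i) k (by simp) ?_
            have hne : (k : ℕ) ≠ (i : ℕ) := fun hc => hk (Fin.ext (by simp [hc]))
            simp only [Fin.coe_castLE]
            omega
        rw [hA n i (Fin.castLE hgh i), if_pos (by simpa using i.isLt), hordmul, hS, hpinv,
          ← EReal.coe_add]
        congr 1
        push_cast
        ring
      · -- diagonal lower bound
        intro i h1
        have hr : 0 ≤ U i := hU0 i
        have hpow1 : (1 : ℝ) ≤ (p : ℝ) ^ n := one_le_pow₀ (by linarith)
        have hvn0 : 0 ≤ ((p : ℝ) ^ n - 1) / ((p : ℝ) - 1) * U i :=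
          mul_nonneg (div_nonneg (by linarith) (by linarith)) hr
        have hterm_i : ((1 - (n : ℝ) : ℝ) : EReal) ≤ ord (a n i (Fin.castLE hgh i) *
              ((WittVector.ghostComponent n
                (M (Fin.castLE hgh i) (Fin.castLE hgh i)) : Rs) : K)) := by
          rw [hordmul]
          rcases lt_or_ge (((p : ℝ) ^ n - 1) / ((p : ℝ) - 1) * U i) 1 with hvn | hvn
          · have hdiag_a := ih1 i hvn
            rcases lt_or_ge ((p : ℝ) ^ n * U i) 1 with hpn | hpn
            · have hdiag_w := aux_ghost_eq p ord hord0 hordmul hordadd hordp Rs hmem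
                (M (Fin.castLE hgh i) (Fin.castLE hgh i)) n (U i) (hU i) hpn
              rw [hdiag_a, hdiag_w, ← EReal.coe_add, EReal.coe_le_coe_iff]
              have he : ((p : ℝ) ^ n - 1) / ((p : ℝ) - 1) * U i + (p : ℝ) ^ n * U i
                  = ((p : ℝ) ^ (n + 1) - 1) / ((p : ℝ) - 1) * U i := by
                field_simp
                ring
              linarith
            · have hw1 := aux_ghost_ge p ord hord0 hordmul hordadd hordp Rs hmem
                (M (Fin.castLE hgh i) (Fin.castLE hgh i)) n (U i) (hU i) hpn
              have h2 := add_le_add (le_of_eq hdiag_a.symm) hw1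
              refine le_trans ?_ h2
              rw [show (1 : EReal) = ((1 : ℝ) : EReal) from EReal.coe_one.symm, ← EReal.coe_add,
                EReal.coe_le_coe_iff]
              linarith
          · have h2 := add_le_add (ih2 i hvn) (hwge0 n (Fin.castLE hgh i) (Fin.castLE hgh i))
            simpa using h2
        have hS : ((1 - (n : ℝ) : ℝ) : EReal) ≤ ord (∑ k : Fin h, a n i k *
              ((WittVector.ghostComponent n (M k (Fin.castLE hgh i)) : Rs) : K)) := by
          refine aux_ord_sum_ge ord hord0 hordadd _ _ _ (fun k _ => ?_)
          rcases eq_or_ne k (Fin.castLE hgh i) with rfl | hk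
          · exact hterm_i
          · refine hterm1 i (Fin.castLE hgh i) k (by simp) ?_
            have hne : (k : ℕ) ≠ (i : ℕ) := fun hc => hk (Fin.ext (by simp [hc]))
            simp only [Fin.coe_castLE]
            omega
        rw [hA n i (Fin.castLE hgh i), if_pos (by simpa using i.isLt), hordmul, hpinv]
        have h2 := add_le_add hS (le_refl (((-1 : ℝ)) : EReal))
        rw [← EReal.coe_add] at h2
        refine le_trans (le_of_eq ?_) h2
        congr 1
        push_cast
        ring
      · -- all entries ≥ -(n+1)
        intro i k
        rw [hA n i k]
        split_ifs with hkg
        · rw [hordmul, hpinv]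
          have h2 := add_le_add (hSany i k) (le_refl ((-1 : ℝ) : EReal))
          rw [← EReal.coe_add] at h2
          refine le_trans (le_of_eq ?_) h2
          congr 1
          push_cast
          ring
        · rw [mul_one]
          refine le_trans ?_ (hSany i k)
          rw [EReal.coe_le_coe_iff]
          push_cast
          linarith
      · -- good entries ≥ 1-(n+1) = -n
        intro i k hk
        rw [hA n i k]
        split_ifs with hkg
        · have hki : (k : ℕ) < (i : ℕ) := by omega
          have hS : ((1 - n : ℝ) : EReal) ≤ ord (∑ k' : Fin h,
              a n i k' * ((WittVector.ghostComponent n (M k' k) : Rs) : K)) := by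
            refine aux_ord_sum_ge ord hord0 hordadd _ _ _ (fun k' _ => ?_)
            exact hterm1 i k k' (le_of_lt hki) (by omega)
          rw [hordmul, hpinv]
          have h2 := add_le_add hS (le_refl ((-1 : ℝ) : EReal))
          rw [← EReal.coe_add] at h2
          refine le_trans (le_of_eq ?_) h2
          congr 1
          push_cast
          ring
        · rw [mul_one]
          refine le_trans ?_ (hSany i k)
          rw [EReal.coe_le_coe_iff]
          push_cast
          linarith
  constructor
  · refine ⟨?_, ?_, ?_, ?_, ?_, ?_⟩
    · intro i
      have h1 := (key 0).1 i (by norm_num)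
      show ord (a 0 i (Fin.castLE hgh i)) = 0
      rw [h1]
      norm_num
    · intro i j hij
      show ord (a 0 i (Fin.castLE hgh j)) = ⊤
      rw [ha0, if_neg (by simpa using fun hc => hij (Fin.ext hc).symm)]
      exact (hord0 0).mpr rfl
    · intro i n _ hlt
      exact (key n).1 i hlt
    · intro i n hge
      exact (key n).2.1 i hge
    · intro i j n
      exact (key n).2.2.1 i (Fin.castLE hgh j)
    · intro i j n hji
      exact (key n).2.2.2 i (Fin.castLE hgh j) (Or.inl (by simpa using hji))
  · intro n i j hj
    exact (key n).2.2.2 i j (Or.inr hj)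
end
end

section
/- Let g ≥ 1 and let B = (b_{ij}) be a g×g matrix over K that is upper triangular (b_{ij} = 0 for i > j), has all entries in the valuation ring (ord(b_{ij}) ≥ 0 for all i, j), and has nonzero diagonal entries (b_{ii} ≠ 0 for all i). Let ν = (ν_1,…,ν_g) ∈ K^g be a nonzero vector with ord(ν_i) ≥ 0 for all i. Then the vector B·ν is nonzero, and min_{1 ≤ i ≤ g} ord((B·ν)_i) ≤ Σ_{i=1}^g ord(b_{ii}) + min_{1 ≤ i ≤ g} ord(ν_i). -/
open scoped BigOperators

noncomputable section

section Aux

variable {K : Type*} [Field K] (ord : K → EReal)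
    (hord0 : ∀ x : K, ord x = ⊤ ↔ x = 0)
    (hordmul : ∀ x y : K, ord (x * y) = ord x + ord y)
    (hordadd : ∀ x y : K, min (ord x) (ord y) ≤ ord (x + y))

lemma ereal_self_add_self {a : EReal} (h : a + a = 0) : a = 0 := by
  induction a using EReal.rec with
  | bot => simp at h
  | coe x =>
      have hx : x + x = (0 : ℝ) := by exact_mod_cast h
      have : x = 0 := by linarith
      simp [this]
  | top => simp at h

include hord0 hordmul in
lemma my_ord_one : ord (1 : K) = 0 := by
  have h1 : ord (1 : K) = ord 1 + ord 1 := by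
    simpa using hordmul 1 1
  have hne : ord (1 : K) ≠ ⊤ := by
    simp [hord0]
  have hnb : ord (1 : K) ≠ ⊥ := by
    intro hb
    have h := hordmul 0 1
    rw [hb, mul_one] at h
    have h0 : ord (0 : K) = ⊤ := (hord0 0).mpr rfl
    rw [h0] at h
    simp at h
  generalize ha : ord (1 : K) = a at h1 hne hnb
  induction a using EReal.rec with
  | bot => exact absurd rfl hnb
  | coe x =>
      have hx : x = x + x := by exact_mod_cast h1
      have : x = 0 := by linarith
      simp [this]
  | top => exact absurd rfl hne

include hord0 hordmul in
lemma my_ord_neg (x : K) : ord (-x) = ord x := by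
  have hm1 : ord (-1 : K) = 0 := by
    apply ereal_self_add_self
    have h := hordmul (-1) (-1)
    rw [show ((-1 : K) * (-1) = 1) by ring, my_ord_one ord hord0 hordmul] at h
    exact h.symm
  have h : ord (-x) = ord (-1 : K) + ord x := by
    rw [← hordmul]; ring_nf
  rw [h, hm1, zero_add]

include hord0 hordadd in
lemma my_ord_sum {ι : Type*} (s : Finset ι) (f : ι → K) (c : EReal)
    (h : ∀ j ∈ s, c ≤ ord (f j)) : c ≤ ord (∑ j ∈ s, f j) := by
  classical
  induction s using Finset.induction with
  | empty =>
      simp only [Finset.sum_empty]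
      rw [(hord0 0).mpr rfl]
      exact le_top
  | insert _ _ hx ih =>
      rename_i a s'
      rw [Finset.sum_insert hx]
      refine le_trans ?_ (hordadd _ _)
      exact le_min (h a (Finset.mem_insert_self a s'))
        (ih fun j hj => h j (Finset.mem_insert_of_mem hj))

include hord0 hordmul in
lemma my_ord_prod {ι : Type*} (s : Finset ι) (f : ι → K) :
    ord (∏ j ∈ s, f j) = ∑ j ∈ s, ord (f j) := by
  classical
  induction s using Finset.induction with
  | empty => simp [my_ord_one ord hord0 hordmul]
  | insert _ _ hx ih =>
      rename_i a s'
      rw [Finset.prod_insert hx, Finset.sum_insert hx, hordmul, ih]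

end Aux

/-- (Size estimate for upper-triangular matrices over a valued field.)  Let
`ord` be a rank-1 nonarchimedean valuation on `K`.  If `B` is upper triangular
with integral entries and nonzero diagonal, and `ν ≠ 0` is an integral vector,
then `B·ν ≠ 0` and
`min_i ord((B·ν)_i) ≤ Σ_i ord(B_{i,i}) + min_i ord(ν_i)`. -/
theorem upper_triangular_size_bound (K : Type*) [Field K] (ord : K → EReal)
    (hord0 : ∀ x : K, ord x = ⊤ ↔ x = 0)
    (hordmul : ∀ x y : K, ord (x * y) = ord x + ord y)
    (hordadd : ∀ x y : K, min (ord x) (ord y) ≤ ord (x + y))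
    (g : ℕ) (hg : 1 ≤ g)
    (B : Matrix (Fin g) (Fin g) K)
    (htri : ∀ i j : Fin g, j < i → B i j = 0)
    (hint : ∀ i j : Fin g, 0 ≤ ord (B i j))
    (hdiag : ∀ i : Fin g, B i i ≠ 0)
    (ν : Fin g → K) (hν : ν ≠ 0) :
    B.mulVec ν ≠ 0 ∧
      (⨅ i : Fin g, ord (B.mulVec ν i))
        ≤ (∑ i : Fin g, ord (B i i)) + ⨅ i : Fin g, ord (ν i) := by
  classical
  haveI : Nonempty (Fin g) := ⟨⟨0, hg⟩⟩
  set w := B.mulVec ν with hw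
  -- determinant
  have hdet : B.det = ∏ i : Fin g, B i i :=
    Matrix.det_of_upperTriangular (fun i j h => htri i j h)
  have hdetne : B.det ≠ 0 := by
    rw [hdet]; exact Finset.prod_ne_zero_iff.mpr fun i _ => hdiag i
  -- adjugate identity
  have hadj : ∀ i : Fin g, (B.adjugate.mulVec w) i = B.det * ν i := by
    intro i
    rw [hw, Matrix.mulVec_mulVec, Matrix.adjugate_mul, Matrix.smul_mulVec,
      Matrix.one_mulVec]
    rfl
  -- B·ν ≠ 0
  have hwne : w ≠ 0 := by
    intro h0
    apply hν
    funext i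
    have := hadj i
    rw [h0] at this
    simp only [Matrix.mulVec_zero, Pi.zero_apply] at this
    have := this.symm
    rcases mul_eq_zero.mp this with h | h
    · exact absurd h hdetne
    · simpa using h
  refine ⟨hwne, ?_⟩
  -- integrality subring
  set S : Subring K :=
    { carrier := {x : K | 0 ≤ ord x}
      one_mem' := by simp [my_ord_one ord hord0 hordmul]
      mul_mem' := by
        intro a b ha hb
        simp only [Set.mem_setOf_eq] at *
        rw [hordmul]
        exact add_nonneg ha hb
      zero_mem' := by
        simp only [Set.mem_setOf_eq]
        rw [(hord0 0).mpr rfl]; exact le_top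
      add_mem' := by
        intro a b ha hb
        simp only [Set.mem_setOf_eq] at *
        exact le_trans (le_min ha hb) (hordadd a b)
      neg_mem' := by
        intro a ha
        simp only [Set.mem_setOf_eq] at *
        rwa [my_ord_neg ord hord0 hordmul] } with hS
  -- adjugate entries are integral
  have hadjint : ∀ i j : Fin g, 0 ≤ ord (B.adjugate i j) := by
    intro i j
    set B' : Matrix (Fin g) (Fin g) S := fun i j => ⟨B i j, hint i j⟩ with hB'
    have hmap : S.subtype.mapMatrix B' = B := by
      ext a b; rfl
    have h2 : B.adjugate = S.subtype.mapMatrix B'.adjugate := by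
      rw [S.subtype.map_adjugate, hmap]
    rw [h2]
    exact (B'.adjugate i j).2
  -- minimizer of ord ν
  obtain ⟨i₀, hi₀⟩ := Finite.exists_min (fun i : Fin g => ord (ν i))
  have hinfν : (⨅ i : Fin g, ord (ν i)) = ord (ν i₀) :=
    le_antisymm (iInf_le _ _) (le_iInf hi₀)
  set M := ⨅ i : Fin g, ord (w i) with hM
  -- M ≤ ord ((adj B · w) i₀)
  have key : M ≤ ord ((B.adjugate.mulVec w) i₀) := by
    rw [Matrix.mulVec]
    refine my_ord_sum ord hord0 hordadd _ _ _ ?_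
    intro j _
    rw [hordmul]
    calc M ≤ ord (w j) := iInf_le _ _
      _ = 0 + ord (w j) := (zero_add _).symm
      _ ≤ ord (B.adjugate i₀ j) + ord (w j) := by
          exact add_le_add_left (hadjint i₀ j) _
  rw [hadj i₀, hordmul, hdet, my_ord_prod ord hord0 hordmul] at key
  rw [hinfν]
  exact key

end
end

section
/- Let S be a noetherian local ring with maximal ideal 𝔫 and let ψ : S → R be a local ring homomorphism. Then: (a) there exists a real number c > 0 such that ord(ψ(x)) ≥ c for all x ∈ 𝔫; and consequently (b) ψ extends to the 𝔫-adic completion, i.e. there is a ring homomorphism ψ̂ : Ŝ → R from the 𝔫-adic completion Ŝ of S to R whose composition with the canonical map S → Ŝ equals ψ. -/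
open scoped BigOperators Classical

noncomputable section

/-- The valuation `ord x = −log ‖x‖ ∈ ℝ ∪ {+∞}`, with `ord 0 = +∞`. -/
def ordOfNorm {K : Type*} [NontriviallyNormedField K] (x : K) : EReal :=
  if x = 0 then ⊤ else ((-Real.log ‖x‖ : ℝ) : EReal)

/-- (Extension of local maps to the completion.)  Let `K` be a field complete
with respect to a rank-1 (nonarchimedean) valuation, with valuation ring
`R = {x : ‖x‖ ≤ 1}`.  Let `S` be a noetherian local ring and `ψ : S → R` a
local homomorphism.  Then (a) there is `c > 0` with `ord(ψ x) ≥ c` for all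
`x` in the maximal ideal `𝔫` of `S`, and consequently (b) `ψ` extends to a ring
homomorphism `ψ̂` from the `𝔫`-adic completion of `S` to `R` with
`ψ̂ ∘ (S → Ŝ) = ψ`. -/
theorem local_hom_extends_to_completion (K : Type*) [NontriviallyNormedField K]
    [CompleteSpace K]
    (hna : ∀ x y : K, ‖x + y‖ ≤ max ‖x‖ ‖y‖)
    (Rs : Subring K) (hRs : ∀ x : K, x ∈ Rs ↔ ‖x‖ ≤ 1)
    (S : Type*) [CommRing S] [IsNoetherianRing S] [IsLocalRing S]
    (ψ : S →+* Rs) (hψ : IsLocalHom ψ) :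
    (∃ c : ℝ, 0 < c ∧ ∀ x ∈ IsLocalRing.maximalIdeal S,
        ((c : ℝ) : EReal) ≤ ordOfNorm ((ψ x : K))) ∧
    (∃ ψhat : AdicCompletion (IsLocalRing.maximalIdeal S) S →+* Rs,
        ψhat.comp (algebraMap S (AdicCompletion (IsLocalRing.maximalIdeal S) S)) = ψ) := by
  classical
  set I := IsLocalRing.maximalIdeal S with hI
  have hle1 : ∀ x : S, ‖(ψ x : K)‖ ≤ 1 := fun x => (hRs _).1 (ψ x).2
  -- every element of the maximal ideal maps to norm < 1
  have hlt1 : ∀ x ∈ I, ‖(ψ x : K)‖ < 1 := by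
    intro x hx
    rcases lt_or_eq_of_le (hle1 x) with h | h
    · exact h
    · exfalso
      have hne : (ψ x : K) ≠ 0 := by
        intro h0; rw [h0] at h; simp at h
      have hinv : (ψ x : K)⁻¹ ∈ Rs := by
        rw [hRs, norm_inv, h, inv_one]
      have hunit : IsUnit (ψ x) := by
        refine isUnit_iff_exists_inv.2 ⟨⟨(ψ x : K)⁻¹, hinv⟩, ?_⟩
        exact Subtype.ext (mul_inv_cancel₀ hne)
      exact hx (hψ.map_nonunit x hunit)
  -- finite generating set
  obtain ⟨s, hs⟩ := (IsNoetherian.noetherian I : I.FG)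
  set t : Finset S := insert 0 s with ht
  have htne : t.Nonempty := ⟨0, Finset.mem_insert_self 0 s⟩
  set r : ℝ := max (1/2) (t.sup' htne fun x => ‖(ψ x : K)‖) with hr
  have hr0 : 0 < r := lt_of_lt_of_le (by norm_num) (le_max_left _ _)
  have htmem : ∀ x ∈ t, x ∈ I := by
    intro x hx
    rcases Finset.mem_insert.1 hx with h | h
    · rw [h]; exact zero_mem I
    · rw [← hs]; exact Submodule.subset_span h
  have hr1 : r < 1 := by
    apply max_lt (by norm_num)
    rw [Finset.sup'_lt_iff]
    intro x hx
    exact hlt1 x (htmem x hx)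
  have hcoe_add : ∀ a b : S, (ψ (a + b) : K) = (ψ a : K) + (ψ b : K) := by
    intro a b; rw [map_add]; rfl
  have hcoe_mul : ∀ a b : S, (ψ (a * b) : K) = (ψ a : K) * (ψ b : K) := by
    intro a b; rw [map_mul]; rfl
  -- basic bound on the maximal ideal
  have hb1 : ∀ x ∈ I, ‖(ψ x : K)‖ ≤ r := by
    intro x hx
    rw [← hs] at hx
    refine Submodule.span_induction ?_ ?_ ?_ ?_ hx
    · intro y hy
      have hyt : y ∈ t := Finset.mem_insert_of_mem hy
      exact le_max_of_le_right (Finset.le_sup' (fun x => ‖(ψ x : K)‖) hyt)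
    · simpa using hr0.le
    · intro a b _ _ ha hb
      calc ‖(ψ (a + b) : K)‖ = ‖(ψ a : K) + (ψ b : K)‖ := by rw [hcoe_add]
        _ ≤ max ‖(ψ a : K)‖ ‖(ψ b : K)‖ := hna _ _
        _ ≤ r := max_le ha hb
    · intro a b _ hb
      have h : (ψ (a • b) : K) = (ψ a : K) * (ψ b : K) := by
        rw [smul_eq_mul]; exact hcoe_mul a b
      rw [h, norm_mul]
      calc ‖(ψ a : K)‖ * ‖(ψ b : K)‖ ≤ 1 * r :=
            mul_le_mul (hle1 a) hb (norm_nonneg _) zero_le_one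
        _ = r := one_mul r
  -- bound on powers of the maximal ideal
  have hbn : ∀ n : ℕ, ∀ x ∈ I ^ n, ‖(ψ x : K)‖ ≤ r ^ n := by
    intro n
    induction n with
    | zero => intro x _; simpa using hle1 x
    | succ n ih =>
      intro x hx
      rw [pow_succ] at hx
      refine Submodule.mul_induction_on hx ?_ ?_
      · intro a ha b hb
        rw [hcoe_mul, norm_mul, pow_succ]
        exact mul_le_mul (ih a ha) (hb1 b hb) (norm_nonneg _) (pow_nonneg hr0.le n)
      · intro a b ha hb
        calc ‖(ψ (a + b) : K)‖ = ‖(ψ a : K) + (ψ b : K)‖ := by rw [hcoe_add]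
          _ ≤ max ‖(ψ a : K)‖ ‖(ψ b : K)‖ := hna _ _
          _ ≤ r ^ (n + 1) := max_le ha hb
  constructor
  · -- part (a)
    refine ⟨-Real.log r, neg_pos.2 (Real.log_neg hr0 hr1), ?_⟩
    intro x hx
    by_cases h0 : (ψ x : K) = 0
    · rw [ordOfNorm, if_pos h0]; exact le_top
    · rw [ordOfNorm, if_neg h0]
      rw [EReal.coe_le_coe_iff]
      exact neg_le_neg (Real.log_le_log (norm_pos_iff.2 h0) (hb1 x hx))
  · -- part (b)
    set ψK : S → K := fun x => (ψ x : K) with hψK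
    have hsurj : ∀ n (q : S ⧸ (I ^ n • ⊤ : Submodule S S)),
        ∃ x : S, Submodule.Quotient.mk x = q :=
      fun n => Submodule.Quotient.mk_surjective _
    set seq : AdicCompletion I S → ℕ → S := fun f n => (hsurj n (f.val n)).choose with hseq
    have hseqmk : ∀ (f : AdicCompletion I S) (n : ℕ),
        (Submodule.Quotient.mk (seq f n) : S ⧸ (I ^ n • ⊤ : Submodule S S)) = f.val n :=
      fun f n => (hsurj n (f.val n)).choose_spec
    have hmem : ∀ (n : ℕ) (x : S),
        (Submodule.Quotient.mk x : S ⧸ (I ^ n • ⊤ : Submodule S S)) = 0 → ‖ψK x‖ ≤ r ^ n := by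
      intro n x hx
      have hmem' : x ∈ (I ^ n • ⊤ : Submodule S S) := (Submodule.Quotient.mk_eq_zero _).1 hx
      have heq : (I ^ n • ⊤ : Ideal S) = I ^ n := by simp
      rw [heq] at hmem'
      exact hbn n x hmem'
    have hdiff : ∀ (n : ℕ) (x y : S),
        (Submodule.Quotient.mk x : S ⧸ (I ^ n • ⊤ : Submodule S S)) = Submodule.Quotient.mk y →
        ‖ψK x - ψK y‖ ≤ r ^ n := by
      intro n x y hxy
      have h1 : ψK x - ψK y = ψK (x - y) := by
        simp only [hψK]
        rw [map_sub]; rfl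
      rw [h1]
      apply hmem
      rw [Submodule.Quotient.mk_sub, hxy, sub_self]
    have hmklow : ∀ (f : AdicCompletion I S) {m n : ℕ}, m ≤ n →
        (Submodule.Quotient.mk (seq f n) : S ⧸ (I ^ m • ⊤ : Submodule S S)) = f.val m := by
      intro f m n hmn
      rw [← f.property hmn, ← hseqmk f n]; rfl
    have hpow0 : Filter.Tendsto (fun n => r ^ n) Filter.atTop (nhds 0) :=
      tendsto_pow_atTop_nhds_zero_of_lt_one hr0.le hr1
    have hcau : ∀ f : AdicCompletion I S, CauchySeq (fun n => ψK (seq f n)) := by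
      intro f
      apply cauchySeq_of_le_tendsto_0 (fun n => r ^ n) _ hpow0
      intro n m N hn hm
      rw [dist_eq_norm]
      apply hdiff
      rw [hmklow f hn, hmklow f hm]
    set L : AdicCompletion I S → K :=
      fun f => Filter.limUnder Filter.atTop (fun n => ψK (seq f n)) with hL
    have htend : ∀ f : AdicCompletion I S,
        Filter.Tendsto (fun n => ψK (seq f n)) Filter.atTop (nhds (L f)) :=
      fun f => (hcau f).tendsto_limUnder
    have hU : ∀ (f : AdicCompletion I S) (u : ℕ → S),
        (∀ n, (Submodule.Quotient.mk (u n) : S ⧸ (I ^ n • ⊤ : Submodule S S)) = f.val n) →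
        Filter.Tendsto (fun n => ψK (u n)) Filter.atTop (nhds (L f)) := by
      intro f u hu
      refine (htend f).congr_dist ?_
      refine squeeze_zero (fun n => dist_nonneg) (fun n => ?_) hpow0
      rw [dist_eq_norm]
      apply hdiff
      rw [hseqmk f n, hu n]
    have hLmem : ∀ f : AdicCompletion I S, L f ∈ Rs := by
      intro f
      rw [hRs]
      exact le_of_tendsto' (htend f).norm fun n => hle1 _
    refine ⟨{ toFun := fun f => ⟨L f, hLmem f⟩, map_one' := ?_, map_mul' := ?_,
              map_zero' := ?_, map_add' := ?_ }, ?_⟩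
    · refine Subtype.ext ?_
      have h1 : Filter.Tendsto (fun n : ℕ => ψK 1) Filter.atTop
          (nhds (L (1 : AdicCompletion I S))) := hU 1 (fun _ => (1 : S)) (fun n => rfl)
      have h2 : (ψK 1 : K) = 1 := by simp [hψK]
      have h3 : Filter.Tendsto (fun n : ℕ => ψK 1) Filter.atTop (nhds (1 : K)) := by
        rw [h2]; exact tendsto_const_nhds
      exact tendsto_nhds_unique h1 h3
    · intro f g
      refine Subtype.ext ?_
      have h1 : Filter.Tendsto (fun n => ψK (seq f n * seq g n)) Filter.atTop
          (nhds (L (f * g))) := by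
        refine hU (f * g) _ fun n => ?_
        rw [AdicCompletion.val_mul, ← hseqmk f n, ← hseqmk g n]
        rfl
      have h2 : Filter.Tendsto (fun n => ψK (seq f n * seq g n)) Filter.atTop
          (nhds (L f * L g)) := by
        have := (htend f).mul (htend g)
        refine this.congr fun n => ?_
        simp only [hψK]
        rw [← hcoe_mul]
      exact tendsto_nhds_unique h1 h2
    · refine Subtype.ext ?_
      have h1 : Filter.Tendsto (fun n : ℕ => ψK 0) Filter.atTop
          (nhds (L (0 : AdicCompletion I S))) := hU 0 (fun _ => (0 : S)) (fun n => rfl)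
      have h2 : (ψK 0 : K) = 0 := by simp [hψK]
      have h3 : Filter.Tendsto (fun n : ℕ => ψK 0) Filter.atTop (nhds (0 : K)) := by
        rw [h2]; exact tendsto_const_nhds
      exact tendsto_nhds_unique h1 h3
    · intro f g
      refine Subtype.ext ?_
      have h1 : Filter.Tendsto (fun n => ψK (seq f n + seq g n)) Filter.atTop
          (nhds (L (f + g))) := by
        refine hU (f + g) _ fun n => ?_
        rw [Submodule.Quotient.mk_add, hseqmk f n, hseqmk g n, AdicCompletion.val_add_apply]
      have h2 : Filter.Tendsto (fun n => ψK (seq f n + seq g n)) Filter.atTop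
          (nhds (L f + L g)) := by
        have := (htend f).add (htend g)
        refine this.congr fun n => ?_
        simp only [hψK]
        rw [← hcoe_add]
      exact tendsto_nhds_unique h1 h2
    · ext x
      show L (algebraMap S (AdicCompletion I S) x) = (ψ x : K)
      have h1 : Filter.Tendsto (fun n : ℕ => ψK x) Filter.atTop
          (nhds (L (algebraMap S (AdicCompletion I S) x))) :=
        hU (algebraMap S (AdicCompletion I S) x) (fun _ => x) (fun n => rfl)
      exact tendsto_nhds_unique h1 tendsto_const_nhds
end
end
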